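/- arXiv:1407.6216 — 5 statements merged into one kernel-verified Lean document; each statement's English description precedes it below -/
import Mathlib

section
/- Let d ≥ 2, let X satisfy Assumption (A) with E[X⁴] ≥ 3, let X = {X_i : i ≥ 1} be i.i.d. copies of X, and let N = {N_i : i ≥ 1} be i.i.d. standard Gaussian random variables. Then for every n ≥ 1 and every admissible kernel f : [n]^d → ℝ, one has E[Q_X(f)⁴] ≥ E[Q_N(f)⁴]. -/
open MeasureTheory ProbabilityTheory Filter Topology

noncomputable section

/-- A kernel `f : [n]^d → ℝ` is *admissible*: it vanishes on diagonals, is symmetric,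
and satisfies the normalization `d! * Σ f² = 1`. -/
def Admissible (d n : ℕ) (f : (Fin d → Fin n) → ℝ) : Prop :=
  (∀ i : Fin d → Fin n, ¬ Function.Injective i → f i = 0) ∧
  (∀ (σ : Equiv.Perm (Fin d)) (i : Fin d → Fin n), f (i ∘ σ) = f i) ∧
  (Nat.factorial d : ℝ) * ∑ i : Fin d → Fin n, (f i) ^ 2 = 1

/-- The homogeneous sum `Q_X(f) = Σ_{i₁,…,i_d} f(i₁,…,i_d) X_{i₁} ⋯ X_{i_d}`. -/
def QSum {Ω : Type*} (d n : ℕ) (f : (Fin d → Fin n) → ℝ) (X : ℕ → Ω → ℝ) (ω : Ω) : ℝ :=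
  ∑ i : Fin d → Fin n, f i * ∏ k : Fin d, X (i k).val ω

/-- Assumption (A): `X` is centered with unit variance, vanishing third moment,
and finite fourth moment. -/
def AssumptionA {Ω : Type*} [MeasurableSpace Ω] (μ : Measure Ω) (X : Ω → ℝ) : Prop :=
  Measurable X ∧ Integrable (fun ω => X ω ^ 4) μ ∧
    (∫ ω, X ω ∂μ) = 0 ∧ (∫ ω, X ω ^ 2 ∂μ) = 1 ∧ (∫ ω, X ω ^ 3 ∂μ) = 0

/-- `Xs` is a sequence of i.i.d. copies of `X`. -/
def IIDCopies {Ω : Type*} [MeasurableSpace Ω] (μ : Measure Ω) (X : Ω → ℝ)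
    (Xs : ℕ → Ω → ℝ) : Prop :=
  (∀ i, Measurable (Xs i)) ∧ iIndepFun Xs μ ∧
    ∀ i, μ.map (Xs i) = μ.map X

/-- `Ns` is a sequence of i.i.d. standard Gaussian random variables. -/
def IIDStdGaussian {Ω : Type*} [MeasurableSpace Ω] (μ : Measure Ω)
    (Ns : ℕ → Ω → ℝ) : Prop :=
  (∀ i, Measurable (Ns i)) ∧ iIndepFun Ns μ ∧
    ∀ i, μ.map (Ns i) = gaussianReal 0 1

/-- Convergence in distribution of the sequence `Q n` towards the law `ν`. -/
def TendstoInDistribution {Ω : Type*} [MeasurableSpace Ω] (μ : Measure Ω)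
    (Q : ℕ → Ω → ℝ) (ν : Measure ℝ) : Prop :=
  ∀ g : BoundedContinuousFunction ℝ ℝ,
    Tendsto (fun n => ∫ ω, g (Q n ω) ∂μ) atTop (𝓝 (∫ x, g x ∂ν))

/-- The fourth cumulant `χ₄(W) = E[W⁴] - 3 E[W²]²` of a centered random variable. -/
def chi4 {Ω : Type*} [MeasurableSpace Ω] (μ : Measure Ω) (W : Ω → ℝ) : ℝ :=
  (∫ ω, W ω ^ 4 ∂μ) - 3 * (∫ ω, W ω ^ 2 ∂μ) ^ 2

/-- `X` satisfies the Commutative Fourth Moment Theorem of order `d` (via its i.i.d.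
copies `Xs`): for every sequence of admissible kernels, convergence of the fourth moments
of the homogeneous sums to `3` implies a CLT. -/
def CFMT {Ω : Type*} [MeasurableSpace Ω] (d : ℕ) (μ : Measure Ω) (Xs : ℕ → Ω → ℝ) : Prop :=
  ∀ f : (n : ℕ) → (Fin d → Fin n) → ℝ, (∀ n, 1 ≤ n → Admissible d n (f n)) →
    Tendsto (fun n => ∫ ω, (QSum d n (f n) Xs ω) ^ 4 ∂μ) atTop (𝓝 3) →
    TendstoInDistribution μ (fun n => QSum d n (f n) Xs) (gaussianReal 0 1)

/-- `X` is universal at order `d` (via its i.i.d. copies `Xs`, w.r.t. the i.i.d. standard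
Gaussian sequence `Ns`): a CLT for `Q_X(f_n)` implies a CLT for `Q_N(f_n)`. -/
def UnivD {Ω : Type*} [MeasurableSpace Ω] (d : ℕ) (μ : Measure Ω)
    (Xs Ns : ℕ → Ω → ℝ) : Prop :=
  ∀ f : (n : ℕ) → (Fin d → Fin n) → ℝ, (∀ n, 1 ≤ n → Admissible d n (f n)) →
    TendstoInDistribution μ (fun n => QSum d n (f n) Xs) (gaussianReal 0 1) →
    TendstoInDistribution μ (fun n => QSum d n (f n) Ns) (gaussianReal 0 1)

/-!
A kernel vanishing on diagonals makes `Q(f)` a multilinear polynomial in the variables, so with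
`x_k = t` and the other variables `y` fixed it reads `A y + t * B y`. Replacing the law of one
coordinate at a time (Lindeberg's method), independence gives
`E[(A + t B)⁴] = Σ_m C(4, m) E[t^m] E[B^m A^(4-m)]`. The laws of `X` and `N` share their moments
of order `≤ 3`, so each swap of a Gaussian coordinate for a copy of `X` changes the fourth moment
by `(E[X⁴] - 3) E[B⁴] ≥ 0`.
-/

open Finset

section Moments

variable {α : Type*} {mα : MeasurableSpace α} {μ : Measure α}

lemma abs_pow_mul_abs_pow_le (a b : ℝ) (i j : ℕ) :
    |a| ^ i * |b| ^ j ≤ |a| ^ (i + j) + |b| ^ (i + j) := by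
  rcases le_total |a| |b| with h | h
  · have : |a| ^ i * |b| ^ j ≤ |b| ^ (i + j) := by
      rw [pow_add]; gcongr
    linarith [pow_nonneg (abs_nonneg a) (i + j)]
  · have : |a| ^ i * |b| ^ j ≤ |a| ^ (i + j) := by
      rw [pow_add]; gcongr
    linarith [pow_nonneg (abs_nonneg b) (i + j)]

lemma MeasureTheory.MemLp.integrable_pow_mul_pow [IsFiniteMeasure μ] {A B : α → ℝ} {n i j : ℕ}
    (hA : MemLp A n μ) (hB : MemLp B n μ) (hij : i + j = n) :
    Integrable (fun x => A x ^ i * B x ^ j) μ := by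
  refine (hA.integrable_norm_pow'.add hB.integrable_norm_pow').mono'
    ((hA.1.pow i).mul (hB.1.pow j)) (ae_of_all _ fun x => ?_)
  simpa [abs_mul, abs_pow, hij] using abs_pow_mul_abs_pow_le (A x) (B x) i j

lemma MeasureTheory.MemLp.integrable_pow [IsFiniteMeasure μ] {A : α → ℝ} {n m : ℕ}
    (hA : MemLp A n μ) (hm : m ≤ n) : Integrable (fun x => A x ^ m) μ := by
  simpa using hA.integrable_pow_mul_pow (memLp_const 1) (Nat.add_sub_cancel' hm)

lemma memLp_of_integrable_pow {f : α → ℝ} {n : ℕ} (hn : Even n) (hf : AEStronglyMeasurable f μ)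
    (h : Integrable (fun x => f x ^ n) μ) : MemLp f n μ := by
  rcases eq_or_ne n 0 with rfl | hn0
  · simpa using hf
  rw [← integrable_norm_rpow_iff hf (by simpa using hn0) (by simp)]
  simpa [hn.pow_abs] using h

end Moments

section Swap

variable {Y : Type*} [MeasurableSpace Y] {ν : Measure Y} [IsFiniteMeasure ν]
  {τ τ' : Measure ℝ} [IsFiniteMeasure τ] [IsFiniteMeasure τ'] {A B : Y → ℝ} {n : ℕ}

lemma integral_prod_add_mul_pow (hτ : MemLp id n τ) (hA : MemLp A n ν) (hB : MemLp B n ν) :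
    ∫ z, (A z.2 + z.1 * B z.2) ^ n ∂(τ.prod ν) =
      ∑ m ∈ range (n + 1), (∫ t, t ^ m ∂τ) * ∫ y, B y ^ m * A y ^ (n - m) * n.choose m ∂ν := by
  have hint : ∀ m ∈ range (n + 1),
      Integrable (fun y => B y ^ m * A y ^ (n - m) * n.choose m) ν := fun m hm =>
    (hB.integrable_pow_mul_pow hA (Nat.add_sub_cancel' (mem_range_succ_iff.1 hm))).mul_const _
  calc ∫ z, (A z.2 + z.1 * B z.2) ^ n ∂(τ.prod ν)
      = ∫ z, ∑ m ∈ range (n + 1), z.1 ^ m * (B z.2 ^ m * A z.2 ^ (n - m) * n.choose m)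
          ∂(τ.prod ν) := by
        congr with z
        rw [add_comm, add_pow]
        refine sum_congr rfl fun m _ => ?_
        ring
    _ = _ := by
        rw [integral_finsetSum _ fun m hm =>
          Integrable.mul_prod (f := fun t => t ^ m) (hτ.integrable_pow (mem_range_succ_iff.1 hm))
            (hint m hm)]
        exact sum_congr rfl fun m _ =>
          integral_prod_mul (fun t => t ^ m) fun y => B y ^ m * A y ^ (n - m) * n.choose m

lemma integral_prod_add_mul_pow_le (hn : Even n) (hτ : MemLp id n τ) (hτ' : MemLp id n τ')
    (hmom : ∀ m < n, ∫ t, t ^ m ∂τ' = ∫ t, t ^ m ∂τ) (hmom_n : ∫ t, t ^ n ∂τ' ≤ ∫ t, t ^ n ∂τ)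
    (hA : MemLp A n ν) (hB : MemLp B n ν) :
    ∫ z, (A z.2 + z.1 * B z.2) ^ n ∂(τ'.prod ν) ≤ ∫ z, (A z.2 + z.1 * B z.2) ^ n ∂(τ.prod ν) := by
  rw [integral_prod_add_mul_pow hτ hA hB, integral_prod_add_mul_pow hτ' hA hB,
    sum_range_succ, sum_range_succ,
    sum_congr rfl fun m hm => by rw [hmom m (mem_range.1 hm)]]
  gcongr
  exact integral_nonneg fun y => by simpa using hn.pow_nonneg (B y)

end Swap

section Multilinear

variable {ι : Type*} [Fintype ι]

def multilinearPoly (c : Finset ι → ℝ) (x : ι → ℝ) : ℝ :=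
  ∑ s, c s * ∏ j ∈ s, x j

lemma continuous_multilinearPoly (c : Finset ι → ℝ) : Continuous (multilinearPoly c) := by
  unfold multilinearPoly
  fun_prop

def kernelCoeff [DecidableEq ι] {d : ℕ} (f : (Fin d → ι) → ℝ) (s : Finset ι) : ℝ :=
  ∑ i with univ.image i = s, f i

lemma sum_mul_prod_comp_eq_multilinearPoly [DecidableEq ι] {d : ℕ} {f : (Fin d → ι) → ℝ}
    (hf : ∀ i, ¬ Function.Injective i → f i = 0) (x : ι → ℝ) :
    ∑ i, f i * ∏ l, x (i l) = multilinearPoly (kernelCoeff f) x := by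
  calc ∑ i, f i * ∏ l, x (i l)
      = ∑ i, f i * ∏ j ∈ univ.image i, x j := sum_congr rfl fun i _ => by
        by_cases hi : Function.Injective i
        · rw [prod_image fun a _ b _ h => hi h]
        · simp [hf i hi]
    _ = ∑ s, ∑ i with univ.image i = s, f i * ∏ j ∈ s, x j := by
        rw [← sum_fiberwise univ fun i => univ.image i]
        exact sum_congr rfl fun s _ => sum_congr rfl fun i hi => by rw [(mem_filter.1 hi).2]
    _ = multilinearPoly (kernelCoeff f) x := by
        simp only [multilinearPoly, kernelCoeff, sum_mul]

lemma memLp_pi_prod {ρ : ι → Measure ℝ} [∀ j, IsProbabilityMeasure (ρ j)] {g : ι → ℝ → ℝ}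
    {p : ℕ} (hg : ∀ j, MemLp (g j) p (ρ j)) :
    MemLp (fun x => ∏ j, g j (x j)) p (Measure.pi ρ) := by
  have hmeas : AEStronglyMeasurable (fun x : ι → ℝ => ∏ j, g j (x j)) (Measure.pi ρ) :=
    Finset.aestronglyMeasurable_fun_prod _ fun j _ =>
      (hg j).1.comp_measurePreserving (measurePreserving_eval ρ j)
  rcases eq_or_ne p 0 with rfl | hp
  · simpa using hmeas
  rw [← integrable_norm_rpow_iff hmeas (by simpa using hp) (by simp)]
  simpa [norm_prod, prod_pow] using
    Integrable.fintype_prod fun j => (hg j).integrable_norm_pow'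

lemma memLp_sum_mul_prod_ite {κ : Type*} {ρ : ι → Measure ℝ} [∀ j, IsProbabilityMeasure (ρ j)]
    {p : ℕ} (hρ : ∀ j, MemLp id p (ρ j)) (S : Finset κ) (c : κ → ℝ) (P : κ → ι → Prop)
    [∀ s j, Decidable (P s j)] :
    MemLp (fun x => ∑ s ∈ S, c s * ∏ j, if P s j then x j else 1) p (Measure.pi ρ) :=
  memLp_finsetSum _ fun s _ => (memLp_pi_prod (g := fun j t => if P s j then t else 1) fun j => by
    split_ifs
    · exact hρ j
    · exact memLp_const 1).const_mul (c s)

end Multilinear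

section Lindeberg

variable {n : ℕ}

lemma prod_insertNth (s : Finset (Fin (n + 1))) (k : Fin (n + 1)) (t : ℝ) (y : Fin n → ℝ) :
    ∏ j ∈ s, Fin.insertNth k t y j =
      (if k ∈ s then t else 1) * ∏ j, if k.succAbove j ∈ s then y j else 1 := by
  rw [← Fintype.prod_ite_mem, Fin.prod_univ_succAbove _ k]
  simp only [Fin.insertNth_apply_same, Fin.insertNth_apply_succAbove]

lemma multilinearPoly_insertNth (c : Finset (Fin (n + 1)) → ℝ) (k : Fin (n + 1)) (t : ℝ)
    (y : Fin n → ℝ) :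
    multilinearPoly c (Fin.insertNth k t y) =
      (∑ s with k ∉ s, c s * ∏ j, if k.succAbove j ∈ s then y j else 1) +
        t * ∑ s with k ∈ s, c s * ∏ j, if k.succAbove j ∈ s then y j else 1 := by
  rw [multilinearPoly, ← sum_filter_not_add_sum_filter _ (k ∈ ·), mul_sum]
  congr 1 <;> refine sum_congr rfl fun s hs => ?_
  · simp [prod_insertNth, (mem_filter.1 hs).2]
  · simp [prod_insertNth, (mem_filter.1 hs).2, mul_left_comm]

lemma integral_pi_eq_integral_prod_insertNth (ρ : Fin (n + 1) → Measure ℝ)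
    [∀ j, SigmaFinite (ρ j)] (k : Fin (n + 1)) (G : (Fin (n + 1) → ℝ) → ℝ) :
    ∫ x, G x ∂Measure.pi ρ =
      ∫ z, G (Fin.insertNth k z.1 z.2) ∂(ρ k).prod (Measure.pi fun j => ρ (k.succAbove j)) := by
  rw [← (measurePreserving_piFinSuccAbove ρ k).symm.integral_comp']
  rfl

theorem integral_multilinearPoly_pow_le_of_eq_off {p : ℕ} (hp : Even p) (c : Finset (Fin n) → ℝ)
    {ρ ρ' : Fin n → Measure ℝ} [∀ j, IsProbabilityMeasure (ρ j)]
    [∀ j, IsProbabilityMeasure (ρ' j)] (hρ : ∀ j, MemLp id p (ρ j)) (hρ' : ∀ j, MemLp id p (ρ' j))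
    (k : Fin n) (hoff : ∀ j ≠ k, ρ' j = ρ j) (hmom : ∀ m < p, ∫ t, t ^ m ∂ρ' k = ∫ t, t ^ m ∂ρ k)
    (hmom_p : ∫ t, t ^ p ∂ρ' k ≤ ∫ t, t ^ p ∂ρ k) :
    ∫ x, multilinearPoly c x ^ p ∂Measure.pi ρ' ≤ ∫ x, multilinearPoly c x ^ p ∂Measure.pi ρ := by
  obtain ⟨n, rfl⟩ := Nat.exists_eq_add_one_of_ne_zero k.pos.ne'
  have hν : (Measure.pi fun j => ρ' (k.succAbove j)) = Measure.pi fun j => ρ (k.succAbove j) := by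
    congr 1
    exact funext fun j => hoff _ (k.succAbove_ne j)
  rw [integral_pi_eq_integral_prod_insertNth ρ k, integral_pi_eq_integral_prod_insertNth ρ' k, hν]
  simp only [multilinearPoly_insertNth]
  exact integral_prod_add_mul_pow_le hp (hρ k) (hρ' k) hmom hmom_p
    (memLp_sum_mul_prod_ite (fun j => hρ _) _ _ _) (memLp_sum_mul_prod_ite (fun j => hρ _) _ _ _)

theorem integral_multilinearPoly_pow_le {p : ℕ} (hp : Even p) (c : Finset (Fin n) → ℝ)
    {ρ ρ' : Fin n → Measure ℝ} [∀ j, IsProbabilityMeasure (ρ j)]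
    [∀ j, IsProbabilityMeasure (ρ' j)] (hρ : ∀ j, MemLp id p (ρ j)) (hρ' : ∀ j, MemLp id p (ρ' j))
    (hmom : ∀ j, ∀ m < p, ∫ t, t ^ m ∂ρ' j = ∫ t, t ^ m ∂ρ j)
    (hmom_p : ∀ j, ∫ t, t ^ p ∂ρ' j ≤ ∫ t, t ^ p ∂ρ j) :
    ∫ x, multilinearPoly c x ^ p ∂Measure.pi ρ' ≤ ∫ x, multilinearPoly c x ^ p ∂Measure.pi ρ := by
  classical
  let mix (S : Finset (Fin n)) (j : Fin n) : Measure ℝ := if j ∈ S then ρ j else ρ' j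
  have (S : Finset (Fin n)) (j : Fin n) : IsProbabilityMeasure (mix S j) := by
    dsimp only [mix]
    split_ifs <;> infer_instance
  have hmix (S : Finset (Fin n)) (j : Fin n) : MemLp id p (mix S j) := by
    dsimp only [mix]
    split_ifs
    exacts [hρ j, hρ' j]
  suffices ∀ S, ∫ x, multilinearPoly c x ^ p ∂Measure.pi ρ' ≤
      ∫ x, multilinearPoly c x ^ p ∂Measure.pi (mix S) by
    simpa [mix] using this univ
  intro S
  induction S using Finset.induction_on with
  | empty => simp [mix]
  | insert a S ha ih =>
    refine ih.trans (integral_multilinearPoly_pow_le_of_eq_off hp c (hmix _) (hmix _) a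
      (fun j hj => by simp [mix, hj]) ?_ ?_)
    · simpa [mix, ha] using hmom a
    · simpa [mix, ha] using hmom_p a

end Lindeberg

lemma integral_sq_gaussianReal : ∫ x, x ^ 2 ∂gaussianReal 0 1 = 1 := by
  rw [← variance_of_integral_eq_zero (X := fun x => x) aemeasurable_id' (by simp)]
  simp

lemma integral_pow_three_gaussianReal : ∫ x, x ^ 3 ∂gaussianReal 0 1 = 0 := by
  have h := integral_map (μ := gaussianReal 0 1) (f := fun x : ℝ => x ^ 3)
    measurable_neg.aemeasurable (by fun_prop)
  rw [gaussianReal_map_neg, neg_zero] at h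
  simp only [Odd.neg_pow (by decide : Odd 3), integral_neg] at h
  linarith

lemma deriv_mul_exp_sq_div_two {P P' Q : ℝ → ℝ} (hP : ∀ t, HasDerivAt P (P' t) t)
    (hQ : ∀ t, P' t + t * P t = Q t) :
    deriv (fun t => P t * Real.exp (t ^ 2 / 2)) = fun t => Q t * Real.exp (t ^ 2 / 2) := by
  funext t
  have h : HasDerivAt (fun t : ℝ => t ^ 2 / 2) t t := by
    simpa using (hasDerivAt_pow 2 t).div_const 2
  rw [((hP t).fun_mul h.exp).deriv, ← hQ]
  ring

lemma integral_pow_four_gaussianReal : ∫ x, x ^ 4 ∂gaussianReal 0 1 = 3 := by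
  have hmgf := iteratedDeriv_mgf_zero (X := fun x => x) (μ := gaussianReal 0 1) (by simp) 4
  simp only [mgf_fun_id_gaussianReal, iteratedDeriv_eq_iterate, Function.iterate_succ_apply',
    Function.iterate_zero_apply] at hmgf
  rw [Pi.pow_def] at hmgf
  rw [← hmgf, show (fun t : ℝ => Real.exp (0 * t + ((1 : NNReal) : ℝ) * t ^ 2 / 2)) =
      fun t => 1 * Real.exp (t ^ 2 / 2) by ext; simp,
    deriv_mul_exp_sq_div_two (Q := fun t => t) (fun t => hasDerivAt_const t 1) (by simp),
    deriv_mul_exp_sq_div_two (P := fun t => t) (Q := fun t => 1 + t ^ 2) hasDerivAt_id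
      (by simp [sq]),
    deriv_mul_exp_sq_div_two (P := fun t => 1 + t ^ 2) (Q := fun t => 3 * t + t ^ 3)
      (fun t => (hasDerivAt_pow 2 t).const_add 1) (by intro t; simp; ring),
    deriv_mul_exp_sq_div_two (P := fun t => 3 * t + t ^ 3) (Q := fun t => 3 + 6 * t ^ 2 + t ^ 4)
      (fun t => ((hasDerivAt_id t).const_mul 3).add (hasDerivAt_pow 3 t)) (by intro t; simp; ring)]
  simp

lemma integral_comp_eq_integral_pi_of_iid {Ω : Type*} [MeasurableSpace Ω] {μ : Measure Ω}
    {Y : ℕ → Ω → ℝ} (hm : ∀ i, Measurable (Y i)) (hind : iIndepFun Y μ) {ν : Measure ℝ}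
    (hlaw : ∀ i, μ.map (Y i) = ν) {n : ℕ} {G : (Fin n → ℝ) → ℝ}
    (hG : AEStronglyMeasurable G (Measure.pi fun _ => ν)) :
    ∫ ω, G (fun j => Y j ω) ∂μ = ∫ x, G x ∂Measure.pi fun _ => ν := by
  have hmap : μ.map (fun ω (j : Fin n) => Y j ω) = Measure.pi fun _ => ν := by
    rw [(hind.precomp Fin.val_injective).map_fun_eq_pi_map (f := fun j : Fin n => Y j)
      fun j => (hm j).aemeasurable]
    simp [hlaw]
  rw [← hmap] at hG ⊢
  exact (integral_map (measurable_pi_lambda (fun ω (j : Fin n) => Y j ω) fun j => hm j).aemeasurable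
    hG).symm

theorem fourth_moment_ge_gaussian_fourth_moment_general
    {Ω : Type*} [MeasurableSpace Ω] (μ : Measure Ω) [IsProbabilityMeasure μ]
    (d : ℕ)
    (X : Ω → ℝ) (hA : AssumptionA μ X) (h4 : 3 ≤ ∫ ω, X ω ^ 4 ∂μ)
    (Xs : ℕ → Ω → ℝ) (hXs : IIDCopies μ X Xs)
    (Ns : ℕ → Ω → ℝ) (hNs : IIDStdGaussian μ Ns)
    (n : ℕ) (f : (Fin d → Fin n) → ℝ) (hf : Admissible d n f) :
    ∫ ω, (QSum d n f Ns ω) ^ 4 ∂μ ≤ ∫ ω, (QSum d n f Xs ω) ^ 4 ∂μ := by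
  obtain ⟨hXm, hX4, hX1, hX2, hX3⟩ := hA
  obtain ⟨hXsm, hXsind, hXslaw⟩ := hXs
  obtain ⟨hNsm, hNsind, hNslaw⟩ := hNs
  have : IsProbabilityMeasure (μ.map X) := Measure.isProbabilityMeasure_map hXm.aemeasurable
  have hlaw (m : ℕ) : ∫ t, t ^ m ∂μ.map X = ∫ ω, X ω ^ m ∂μ :=
    integral_map hXm.aemeasurable (by fun_prop)
  have hQ (Y : ℕ → Ω → ℝ) (ω : Ω) :
      QSum d n f Y ω = multilinearPoly (kernelCoeff f) fun j => Y j ω :=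
    sum_mul_prod_comp_eq_multilinearPoly hf.1 fun j => Y j ω
  have hmeas {ν : Measure (Fin n → ℝ)} :
      AEStronglyMeasurable (fun x => multilinearPoly (kernelCoeff f) x ^ 4) ν :=
    ((continuous_multilinearPoly _).pow 4).aestronglyMeasurable
  simp only [hQ]
  rw [integral_comp_eq_integral_pi_of_iid hNsm hNsind hNslaw hmeas,
    integral_comp_eq_integral_pi_of_iid hXsm hXsind hXslaw hmeas]
  refine integral_multilinearPoly_pow_le (by decide) _
    (fun _ => (memLp_map_measure_iff (by fun_prop) hXm.aemeasurable).2
      (memLp_of_integrable_pow (by decide) hXm.aestronglyMeasurable hX4))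
    (fun _ => memLp_id_gaussianReal 4) (fun _ m hm => ?_) (fun _ => ?_)
  · rw [hlaw]
    interval_cases m <;> simp [hX1, hX2, hX3, integral_sq_gaussianReal,
      integral_pow_three_gaussianReal]
  · rwa [hlaw, integral_pow_four_gaussianReal]

/-- `E[Q_X(f)⁴] ≥ E[Q_N(f)⁴]` when `E[X⁴] ≥ 3`. -/
theorem fourth_moment_ge_gaussian_fourth_moment
    {Ω : Type*} [MeasurableSpace Ω] (μ : Measure Ω) [IsProbabilityMeasure μ]
    (d : ℕ) (hd : 2 ≤ d)
    (X : Ω → ℝ) (hA : AssumptionA μ X) (h4 : 3 ≤ ∫ ω, X ω ^ 4 ∂μ)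
    (Xs : ℕ → Ω → ℝ) (hXs : IIDCopies μ X Xs)
    (Ns : ℕ → Ω → ℝ) (hNs : IIDStdGaussian μ Ns)
    (n : ℕ) (hn : 1 ≤ n) (f : (Fin d → Fin n) → ℝ) (hf : Admissible d n f) :
    ∫ ω, (QSum d n f Ns ω) ^ 4 ∂μ ≤ ∫ ω, (QSum d n f Xs ω) ^ 4 ∂μ :=
  fourth_moment_ge_gaussian_fourth_moment_general μ d X hA h4 Xs hXs Ns hNs n f hf
end
end

section
/- Let d ≥ 2 and let X be a real random variable with E[X] = 0, E[X²] = 1 and E[X⁴] < ∞. Let X₁ and {X_j^{(i)} : 2 ≤ j ≤ d, i ≥ 1} all be independent random variables, each distributed as X. For n ≥ 2 set Q_n = X₁ · (X₂^{(1)}⋯X_d^{(1)} + ⋯ + X₂^{(n−1)}⋯X_d^{(n−1)})/√(n−1). Then E[Q_n²] = 1 and E[Q_n⁴] = E[X⁴]·(3 + (E[X⁴]^{d−1} − 3)/(n−1)); in particular, E[Q_n⁴] → 3·E[X⁴] as n → ∞. -/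
/-!
Write `Q_n = X₁ S_{n-1} / √(n-1)`, where `S_m = Y₀ + ⋯ + Y_{m-1}` and `Y_i = X₂^{(i)} ⋯ X_d^{(i)}`.
The `Y_i` are centred with `E[Y_i²] = 1` and `E[Y_i⁴] = E[X⁴]^{d-1}`, `X₁` is independent of
`S_m`, and `S_m` is independent of `Y_m`, because they are functions of disjoint blocks of the
independent family. Expanding `(S_m + Y_m)⁴` binomially, the odd terms vanish, so
`E[S_{m+1}⁴] = E[S_m⁴] + 6m + E[X⁴]^{d-1}`, i.e. `E[S_m⁴] = m E[X⁴]^{d-1} + 3m(m-1)`;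
dividing `E[X⁴] E[S_{n-1}⁴]` by `(n-1)²` gives the formula.
-/

open MeasureTheory ProbabilityTheory Filter Topology

noncomputable section

section Moments

lemma measurable_iSup_comap_of_mem {ι Ω β : Type*} [mβ : MeasurableSpace β] {f : ι → Ω → β}
    {S : Set ι} {i : ι} (hi : i ∈ S) : Measurable[⨆ j ∈ S, mβ.comap (f j)] (f i) :=
  (comap_measurable (f i)).mono (le_iSup₂_of_le i hi le_rfl) le_rfl

variable {Ω : Type*} [MeasurableSpace Ω] {μ : Measure Ω}

lemma integrable_pow_of_le [IsFiniteMeasure μ] {X : Ω → ℝ} {n k : ℕ}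
    (hX : AEStronglyMeasurable X μ) (hn : Integrable (fun ω => X ω ^ n) μ) (hk : k ≤ n) :
    Integrable (fun ω => X ω ^ k) μ := by
  refine ((integrable_const 1).add hn.norm).mono' (hX.pow k) (ae_of_all _ fun ω => ?_)
  simp only [Pi.add_apply, Real.norm_eq_abs, abs_pow]
  rcases le_total |X ω| 1 with h | h
  · linarith [pow_le_one₀ (n := k) (abs_nonneg (X ω)) h, pow_nonneg (abs_nonneg (X ω)) n]
  · linarith [pow_le_pow_right₀ h hk]

lemma ProbabilityTheory.iIndepFun.integrable_finset_prod {ι : Type*} {f : ι → Ω → ℝ}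
    (hf : ∀ i, Measurable (f i)) (h : iIndepFun f μ) (hint : ∀ i, Integrable (f i) μ)
    (s : Finset ι) : Integrable (fun ω => ∏ i ∈ s, f i ω) μ := by
  classical
  induction s using Finset.induction_on with
  | empty => have := h.isProbabilityMeasure; simp
  | insert a s ha ih =>
    simp_rw [Finset.prod_insert ha, mul_comm (f a _)]
    have hind := h.indepFun_finsetProd_of_notMem hf ha
    rw [Finset.prod_fn] at hind
    exact hind.integrable_mul ih (hint a)

lemma ProbabilityTheory.iIndepFun.indepFun_of_measurable_iSup {ι β γ δ : Type*}
    [mβ : MeasurableSpace β] [MeasurableSpace γ] [MeasurableSpace δ] {f : ι → Ω → β}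
    (hf : ∀ i, Measurable (f i)) (h : iIndepFun f μ) {S T : Set ι} (hST : Disjoint S T)
    {F : Ω → γ} {G : Ω → δ} (hF : Measurable[⨆ i ∈ S, mβ.comap (f i)] F)
    (hG : Measurable[⨆ i ∈ T, mβ.comap (f i)] G) :
    IndepFun F G μ := by
  rw [IndepFun_iff_Indep]
  exact indep_of_indep_of_le_right (indep_of_indep_of_le_left
    (indep_iSup_of_disjoint (fun i => (hf i).comap_le) h.iIndep hST) hF.comap_le) hG.comap_le

lemma ProbabilityTheory.IndepFun.integrable_pow_mul_pow {S Y : Ω → ℝ} (h : IndepFun S Y μ)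
    {a b : ℕ} (hS : Integrable (fun ω => S ω ^ a) μ) (hY : Integrable (fun ω => Y ω ^ b) μ) :
    Integrable (fun ω => S ω ^ a * Y ω ^ b) μ :=
  (h.comp (measurable_id.pow_const a) (measurable_id.pow_const b)).integrable_mul hS hY

lemma ProbabilityTheory.IndepFun.integrable_add_pow {S Y : Ω → ℝ} (h : IndepFun S Y μ) {n : ℕ}
    (hS : ∀ k ≤ n, Integrable (fun ω => S ω ^ k) μ)
    (hY : ∀ k ≤ n, Integrable (fun ω => Y ω ^ k) μ) :
    Integrable (fun ω => (S ω + Y ω) ^ n) μ := by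
  simp_rw [add_pow]
  refine integrable_finsetSum _ fun k hk => Integrable.mul_const ?_ _
  exact h.integrable_pow_mul_pow (hS k (Finset.mem_range_succ_iff.1 hk)) (hY _ (Nat.sub_le n k))

lemma ProbabilityTheory.IndepFun.integral_add_pow {S Y : Ω → ℝ} (h : IndepFun S Y μ) {n : ℕ}
    (hS : ∀ k ≤ n, Integrable (fun ω => S ω ^ k) μ)
    (hY : ∀ k ≤ n, Integrable (fun ω => Y ω ^ k) μ) :
    ∫ ω, (S ω + Y ω) ^ n ∂μ =
      ∑ k ∈ Finset.range (n + 1), (∫ ω, S ω ^ k ∂μ) * (∫ ω, Y ω ^ (n - k) ∂μ) * n.choose k := by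
  simp_rw [add_pow]
  rw [integral_finsetSum _ fun k hk => (h.integrable_pow_mul_pow
    (hS k (Finset.mem_range_succ_iff.1 hk)) (hY _ (Nat.sub_le n k))).mul_const _]
  refine Finset.sum_congr rfl fun k hk => ?_
  rw [integral_mul_const]
  congr 1
  exact (h.comp (measurable_id.pow_const k) (measurable_id.pow_const (n - k)))
    |>.integral_fun_mul_eq_mul_integral (hS k (Finset.mem_range_succ_iff.1 hk)).aestronglyMeasurable
      (hY _ (Nat.sub_le n k)).aestronglyMeasurable

lemma ProbabilityTheory.IndepFun.integral_mul_div_pow {A B : Ω → ℝ} (h : IndepFun A B μ)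
    (hA : AEStronglyMeasurable A μ) (hB : AEStronglyMeasurable B μ) (c : ℝ) (k : ℕ) :
    ∫ ω, (A ω * B ω / c) ^ k ∂μ = (∫ ω, A ω ^ k ∂μ) * (∫ ω, B ω ^ k ∂μ) / c ^ k := by
  simp_rw [div_pow, mul_pow]
  rw [integral_div]
  congr 1
  exact (h.comp (measurable_id.pow_const k) (measurable_id.pow_const k))
    |>.integral_fun_mul_eq_mul_integral (hA.pow k) (hB.pow k)

lemma ProbabilityTheory.IndepFun.integral_add_sq [IsProbabilityMeasure μ] {S Y : Ω → ℝ}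
    (h : IndepFun S Y μ) (hS : ∀ k ≤ 2, Integrable (fun ω => S ω ^ k) μ)
    (hY : ∀ k ≤ 2, Integrable (fun ω => Y ω ^ k) μ) (hS1 : ∫ ω, S ω ∂μ = 0) :
    ∫ ω, (S ω + Y ω) ^ 2 ∂μ = ∫ ω, S ω ^ 2 ∂μ + ∫ ω, Y ω ^ 2 ∂μ := by
  rw [h.integral_add_pow hS hY]
  simp only [Nat.reduceAdd, Finset.sum_range_succ, Finset.range_one, Finset.sum_singleton, pow_zero,
    integral_const, probReal_univ, smul_eq_mul, mul_one, tsub_zero, one_mul, Nat.choose_zero_right,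
    Nat.cast_one, pow_one, hS1, Nat.add_one_sub_one, zero_mul, Nat.choose_succ_self_right,
    Nat.cast_ofNat, add_zero, tsub_self, Nat.choose_self]
  ring

lemma ProbabilityTheory.IndepFun.integral_add_pow_four [IsProbabilityMeasure μ] {S Y : Ω → ℝ}
    (h : IndepFun S Y μ) (hS : ∀ k ≤ 4, Integrable (fun ω => S ω ^ k) μ)
    (hY : ∀ k ≤ 4, Integrable (fun ω => Y ω ^ k) μ) (hS1 : ∫ ω, S ω ∂μ = 0)
    (hY1 : ∫ ω, Y ω ∂μ = 0) :
    ∫ ω, (S ω + Y ω) ^ 4 ∂μ =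
      ∫ ω, S ω ^ 4 ∂μ + 6 * (∫ ω, S ω ^ 2 ∂μ) * (∫ ω, Y ω ^ 2 ∂μ) + ∫ ω, Y ω ^ 4 ∂μ := by
  rw [h.integral_add_pow hS hY]
  simp only [Nat.reduceAdd, Finset.sum_range_succ, Finset.range_one, Finset.sum_singleton, pow_zero,
    integral_const, probReal_univ, smul_eq_mul, mul_one, tsub_zero, one_mul, Nat.choose_zero_right,
    Nat.cast_one, pow_one, hS1, hY1, Nat.add_one_sub_one, zero_mul, mul_zero, Nat.choose_one_right,
    Nat.cast_ofNat, add_zero, Nat.reduceSub, show Nat.choose 4 2 = 6 from rfl,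
    Nat.choose_succ_self_right, tsub_self, Nat.choose_self]
  ring

lemma integral_sum_range_eq_zero {Y : ℕ → Ω → ℝ} (hY : ∀ i, Integrable (Y i) μ)
    (h1 : ∀ i, ∫ ω, Y i ω ∂μ = 0) (m : ℕ) : ∫ ω, ∑ i ∈ Finset.range m, Y i ω ∂μ = 0 := by
  rw [integral_finsetSum _ fun i _ => hY i]
  exact Finset.sum_eq_zero fun i _ => h1 i

section PartialSums

variable [IsProbabilityMeasure μ] {Y : ℕ → Ω → ℝ}
  (hindep : ∀ m, IndepFun (fun ω => ∑ i ∈ Finset.range m, Y i ω) (Y m) μ)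
include hindep

lemma integrable_sum_range_pow {n : ℕ} (hY : ∀ i, ∀ k ≤ n, Integrable (fun ω => Y i ω ^ k) μ)
    (m : ℕ) : ∀ k ≤ n, Integrable (fun ω => (∑ i ∈ Finset.range m, Y i ω) ^ k) μ := by
  induction m with
  | zero => intro k _; simp
  | succ m ih =>
    intro k hk
    simp_rw [Finset.sum_range_succ]
    exact (hindep m).integrable_add_pow (fun j hj => ih j (hj.trans hk))
      (fun j hj => hY m j (hj.trans hk))

variable (h1 : ∀ i, ∫ ω, Y i ω ∂μ = 0) (h2 : ∀ i, ∫ ω, Y i ω ^ 2 ∂μ = 1)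
include h1 h2

lemma integral_sum_range_sq (hY : ∀ i, ∀ k ≤ 2, Integrable (fun ω => Y i ω ^ k) μ) (m : ℕ) :
    ∫ ω, (∑ i ∈ Finset.range m, Y i ω) ^ 2 ∂μ = m := by
  induction m with
  | zero => simp
  | succ m ih =>
    simp_rw [Finset.sum_range_succ]
    rw [(hindep m).integral_add_sq (integrable_sum_range_pow hindep hY m) (hY m)
      (integral_sum_range_eq_zero (fun i => by simpa using hY i 1 (by norm_num)) h1 m), ih, h2,
      Nat.cast_succ]

lemma integral_sum_range_pow_four (hY : ∀ i, ∀ k ≤ 4, Integrable (fun ω => Y i ω ^ k) μ)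
    {c : ℝ} (h4 : ∀ i, ∫ ω, Y i ω ^ 4 ∂μ = c) (m : ℕ) :
    ∫ ω, (∑ i ∈ Finset.range m, Y i ω) ^ 4 ∂μ = m * c + 3 * m * (m - 1) := by
  induction m with
  | zero => simp
  | succ m ih =>
    simp_rw [Finset.sum_range_succ]
    rw [(hindep m).integral_add_pow_four (integrable_sum_range_pow hindep hY m) (hY m)
      (integral_sum_range_eq_zero (fun i => by simpa using hY i 1 (by norm_num)) h1 m) (h1 m), ih,
      integral_sum_range_sq hindep h1 h2 (fun i k hk => hY i k (by omega)), h2, h4]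
    push_cast
    ring

end PartialSums

variable {r : ℕ} {W : Option (ℕ × Fin r) → Ω → ℝ}

def rowProd (W : Option (ℕ × Fin r) → Ω → ℝ) (i : ℕ) (ω : Ω) : ℝ := ∏ j, W (some (i, j)) ω

def homogeneousSum (W : Option (ℕ × Fin r) → Ω → ℝ) (n : ℕ) (ω : Ω) : ℝ :=
  W none ω * (∑ i ∈ Finset.range (n - 1), rowProd W i ω) / Real.sqrt ((n : ℝ) - 1)

lemma ProbabilityTheory.IdentDistrib.integral_pow_eq {X Y : Ω → ℝ} (h : IdentDistrib X Y μ μ)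
    (k : ℕ) : ∫ ω, X ω ^ k ∂μ = ∫ ω, Y ω ^ k ∂μ :=
  (h.comp (measurable_id.pow_const k)).integral_eq

lemma ProbabilityTheory.IdentDistrib.integrable_pow_iff {X Y : Ω → ℝ} (h : IdentDistrib X Y μ μ)
    (k : ℕ) : Integrable (fun ω => X ω ^ k) μ ↔ Integrable (fun ω => Y ω ^ k) μ :=
  (h.comp (measurable_id.pow_const k)).integrable_iff

section Independence

variable (hW : iIndepFun W μ)
include hW

lemma iIndepFun_pow_row (i k : ℕ) : iIndepFun (fun j ω => W (some (i, j)) ω ^ k) μ :=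
  (hW.precomp ((Option.some_injective _).comp (Prod.mk_right_injective i))).comp _
    fun _ => measurable_id.pow_const k

variable (hWm : ∀ p, Measurable (W p))
include hWm

lemma indepFun_sum_rowProd_rowProd (m : ℕ) :
    IndepFun (fun ω => ∑ i ∈ Finset.range m, rowProd W i ω) (rowProd W m) μ := by
  refine hW.indepFun_of_measurable_iSup hWm (S := some '' {q | q.1 < m})
    (T := some '' {q | q.1 = m}) ?_ ?_ ?_
  · simp only [Set.disjoint_image_iff (Option.some_injective _)]
    exact Set.disjoint_left.2 fun q (hq : q.1 < m) (hq' : q.1 = m) => hq.ne hq'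
  · exact Finset.measurable_fun_sum _ fun i hi => Finset.measurable_fun_prod _ fun j _ =>
      measurable_iSup_comap_of_mem ⟨(i, j), Finset.mem_range.1 hi, rfl⟩
  · exact Finset.measurable_fun_prod _ fun j _ => measurable_iSup_comap_of_mem ⟨(m, j), rfl, rfl⟩

lemma indepFun_none_sum_rowProd (m : ℕ) :
    IndepFun (W none) (fun ω => ∑ i ∈ Finset.range m, rowProd W i ω) μ := by
  refine hW.indepFun_of_measurable_iSup hWm (S := {none}) (T := Set.range some) ?_ ?_ ?_
  · simp
  · exact measurable_iSup_comap_of_mem rfl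
  · exact Finset.measurable_fun_sum _ fun i _ => Finset.measurable_fun_prod _ fun j _ =>
      measurable_iSup_comap_of_mem ⟨(i, j), rfl⟩

variable {X : Ω → ℝ} (hlaw : ∀ p, IdentDistrib (W p) X μ μ)
include hlaw

lemma integral_rowProd_pow (i k : ℕ) :
    ∫ ω, rowProd W i ω ^ k ∂μ = (∫ ω, X ω ^ k ∂μ) ^ r := by
  simp_rw [rowProd, ← Finset.prod_pow]
  rw [(iIndepFun_pow_row hW i k).integral_fun_prod_eq_prod_integral
    fun j => ((hWm _).pow_const k).aestronglyMeasurable]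
  simp [(hlaw _).integral_pow_eq k]

lemma integrable_rowProd_pow (hX : Integrable (fun ω => X ω ^ 4) μ) (i : ℕ) {k : ℕ}
    (hk : k ≤ 4) : Integrable (fun ω => rowProd W i ω ^ k) μ := by
  have := hW.isProbabilityMeasure
  simp_rw [rowProd, ← Finset.prod_pow]
  exact (iIndepFun_pow_row hW i k).integrable_finset_prod (fun _ => (hWm _).pow_const k)
    (fun _ => ((hlaw _).integrable_pow_iff k).2
      (integrable_pow_of_le (hlaw none).aemeasurable_snd.aestronglyMeasurable hX hk)) _

lemma integral_homogeneousSum_pow (n k : ℕ) :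
    ∫ ω, homogeneousSum W n ω ^ k ∂μ = (∫ ω, X ω ^ k ∂μ) *
      (∫ ω, (∑ i ∈ Finset.range (n - 1), rowProd W i ω) ^ k ∂μ) / Real.sqrt ((n : ℝ) - 1) ^ k := by
  rw [← (hlaw none).integral_pow_eq k]
  exact (indepFun_none_sum_rowProd hW hWm (n - 1)).integral_mul_div_pow
    (hWm none).aestronglyMeasurable
    (Finset.measurable_fun_sum _ fun _ _ =>
      Finset.measurable_fun_prod _ fun _ _ => hWm _).aestronglyMeasurable _ k

lemma integral_rowProd_eq_zero (hm1 : ∫ ω, X ω ∂μ = 0) (hr : r ≠ 0) (i : ℕ) :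
    ∫ ω, rowProd W i ω ∂μ = 0 := by
  simpa [hm1, hr] using integral_rowProd_pow hW hWm hlaw i 1

lemma integral_rowProd_sq (hm2 : ∫ ω, X ω ^ 2 ∂μ = 1) (i : ℕ) :
    ∫ ω, rowProd W i ω ^ 2 ∂μ = 1 := by
  simp [integral_rowProd_pow hW hWm hlaw i 2, hm2]

variable (hX : Integrable (fun ω => X ω ^ 4) μ) (hm1 : ∫ ω, X ω ∂μ = 0)
  (hm2 : ∫ ω, X ω ^ 2 ∂μ = 1) (hr : r ≠ 0)
include hX hm1 hm2 hr

lemma integral_homogeneousSum_sq {n : ℕ} (hn : 2 ≤ n) : ∫ ω, homogeneousSum W n ω ^ 2 ∂μ = 1 := by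
  have := hW.isProbabilityMeasure
  have hn1 : (0 : ℝ) < n - 1 := by rw [sub_pos, Nat.one_lt_cast]; omega
  rw [integral_homogeneousSum_pow hW hWm hlaw, integral_sum_range_sq
    (indepFun_sum_rowProd_rowProd hW hWm) (integral_rowProd_eq_zero hW hWm hlaw hm1 hr)
    (integral_rowProd_sq hW hWm hlaw hm2)
    (fun i k hk => integrable_rowProd_pow hW hWm hlaw hX i (by omega)),
    hm2, Nat.cast_pred (by omega), Real.sq_sqrt hn1.le, one_mul, div_self hn1.ne']

lemma integral_homogeneousSum_pow_four {n : ℕ} (hn : 2 ≤ n) :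
    ∫ ω, homogeneousSum W n ω ^ 4 ∂μ =
      (∫ ω, X ω ^ 4 ∂μ) * (3 + ((∫ ω, X ω ^ 4 ∂μ) ^ r - 3) / ((n : ℝ) - 1)) := by
  have := hW.isProbabilityMeasure
  have hn1 : (0 : ℝ) < n - 1 := by rw [sub_pos, Nat.one_lt_cast]; omega
  have hsqrt : Real.sqrt ((n : ℝ) - 1) ^ 4 = ((n : ℝ) - 1) ^ 2 := by
    rw [show 4 = 2 * 2 from rfl, pow_mul, Real.sq_sqrt hn1.le]
  rw [integral_homogeneousSum_pow hW hWm hlaw, integral_sum_range_pow_four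
    (indepFun_sum_rowProd_rowProd hW hWm) (integral_rowProd_eq_zero hW hWm hlaw hm1 hr)
    (integral_rowProd_sq hW hWm hlaw hm2) (fun i k hk => integrable_rowProd_pow hW hWm hlaw hX i hk)
    (fun i => integral_rowProd_pow hW hWm hlaw i 4), Nat.cast_pred (by omega), hsqrt]
  field_simp
  ring

end Independence

end Moments

/-- `W none = X₁` and `W (some (i, j)) = X_{j+2}^{(i+1)}` for `i ≥ 0`, `j ∈ {0,…,d-2}`. -/
theorem explicit_sum_fourth_moment_general
    {Ω : Type*} [MeasurableSpace Ω] (μ : Measure Ω)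
    (d : ℕ) (hd : 2 ≤ d)
    (X : Ω → ℝ) (hmeas : Measurable X) (hint : Integrable (fun ω => X ω ^ 4) μ)
    (hm1 : (∫ ω, X ω ∂μ) = 0) (hm2 : (∫ ω, X ω ^ 2 ∂μ) = 1)
    (W : Option (ℕ × Fin (d - 1)) → Ω → ℝ) (hWmeas : ∀ p, Measurable (W p))
    (hWindep : iIndepFun W μ)
    (hWlaw : ∀ p, μ.map (W p) = μ.map X)
    (Q : ℕ → Ω → ℝ)
    (hQ : ∀ n ω, Q n ω = W none ω *
        (∑ i ∈ Finset.range (n - 1), ∏ j : Fin (d - 1), W (some (i, j)) ω) /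
          Real.sqrt ((n : ℝ) - 1)) :
    (∀ n, 2 ≤ n →
        (∫ ω, Q n ω ^ 2 ∂μ) = 1 ∧
        (∫ ω, Q n ω ^ 4 ∂μ) =
          (∫ ω, X ω ^ 4 ∂μ) *
            (3 + ((∫ ω, X ω ^ 4 ∂μ) ^ (d - 1) - 3) / ((n : ℝ) - 1))) ∧
      Tendsto (fun n => ∫ ω, Q n ω ^ 4 ∂μ) atTop (𝓝 (3 * ∫ ω, X ω ^ 4 ∂μ)) := by
  have hlaw (p) : IdentDistrib (W p) X μ μ :=
    ⟨(hWmeas p).aemeasurable, hmeas.aemeasurable, hWlaw p⟩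
  obtain rfl : Q = homogeneousSum W := funext fun n => funext (hQ n)
  have hr : d - 1 ≠ 0 := by omega
  have hfourth (n) (hn : 2 ≤ n) :=
    integral_homogeneousSum_pow_four hWindep hWmeas hlaw hint hm1 hm2 hr hn
  refine ⟨fun n hn =>
    ⟨integral_homogeneousSum_sq hWindep hWmeas hlaw hint hm1 hm2 hr hn, hfourth n hn⟩, ?_⟩
  have hlim : Tendsto (fun n : ℕ => (∫ ω, X ω ^ 4 ∂μ) *
      (3 + ((∫ ω, X ω ^ 4 ∂μ) ^ (d - 1) - 3) / ((n : ℝ) - 1))) atTop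
      (𝓝 ((∫ ω, X ω ^ 4 ∂μ) * (3 + 0))) :=
    tendsto_const_nhds.mul (tendsto_const_nhds.add (tendsto_const_nhds.div_atTop
      (tendsto_atTop_add_const_right _ (-1) tendsto_natCast_atTop_atTop)))
  rw [add_zero, mul_comm] at hlim
  exact hlim.congr' (eventually_atTop.2 ⟨2, fun n hn => (hfourth n hn).symm⟩)

/-- Remark: explicit homogeneous sums with fourth moment converging to
`3 E[X⁴]`. The family `W` encodes the independent random variables: `W none = X₁` and
`W (some (i, j)) = X_{j+2}^{(i+1)}` for `i ≥ 0`, `j ∈ {0,…,d-2}`, all distributed as `X`. -/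
theorem explicit_sum_fourth_moment
    {Ω : Type*} [MeasurableSpace Ω] (μ : Measure Ω) [IsProbabilityMeasure μ]
    (d : ℕ) (hd : 2 ≤ d)
    (X : Ω → ℝ) (hmeas : Measurable X) (hint : Integrable (fun ω => X ω ^ 4) μ)
    (hm1 : (∫ ω, X ω ∂μ) = 0) (hm2 : (∫ ω, X ω ^ 2 ∂μ) = 1)
    (W : Option (ℕ × Fin (d - 1)) → Ω → ℝ) (hWmeas : ∀ p, Measurable (W p))
    (hWindep : iIndepFun W μ)
    (hWlaw : ∀ p, μ.map (W p) = μ.map X)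
    (Q : ℕ → Ω → ℝ)
    (hQ : ∀ n ω, Q n ω = W none ω *
        (∑ i ∈ Finset.range (n - 1), ∏ j : Fin (d - 1), W (some (i, j)) ω) /
          Real.sqrt ((n : ℝ) - 1)) :
    (∀ n, 2 ≤ n →
        (∫ ω, Q n ω ^ 2 ∂μ) = 1 ∧
        (∫ ω, Q n ω ^ 4 ∂μ) =
          (∫ ω, X ω ^ 4 ∂μ) *
            (3 + ((∫ ω, X ω ^ 4 ∂μ) ^ (d - 1) - 3) / ((n : ℝ) - 1))) ∧
      Tendsto (fun n => ∫ ω, Q n ω ^ 4 ∂μ) atTop (𝓝 (3 * ∫ ω, X ω ^ 4 ∂μ)) :=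
  explicit_sum_fourth_moment_general μ d hd X hmeas hint hm1 hm2 W hWmeas hWindep hWlaw Q hQ
end
end

section
/- Let d ≥ 2 and let π* be the partition of {1,…,4d} into the four consecutive intervals {1,…,d}, {d+1,…,2d}, {2d+1,…,3d}, {3d+1,…,4d}. Then the set of non-crossing partitions of {1,…,4d} that respect π* and all of whose blocks have size 2 or 4 is exactly the disjoint union of (a) the set of non-crossing pairings of {1,…,4d} respecting π*, and (b) the d partitions ρ_1,…,ρ_d, where for each h = 1,…,d the partition ρ_h consists of the single 4-block {h, 2d−h+1, 2d+h, 4d−h+1} together with the 2-blocks {j, 2d−j+1} and {2d+j, 4d−j+1} for j = h+1,…,d, and the 2-blocks {j, 4d−j+1} and {2d−j+1, 2d+j} for j = 1,…,h−1. -/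
noncomputable section

/-- `C` is a partition of the set `S ⊆ ℕ`: its blocks are nonempty subsets of `S` and
every element of `S` belongs to exactly one block. -/
def IsPartitionOn (S : Set ℕ) (C : Set (Set ℕ)) : Prop :=
  (∀ B ∈ C, B ⊆ S ∧ B.Nonempty) ∧ ∀ x ∈ S, ∃! B, B ∈ C ∧ x ∈ B

/-- A partition is non-crossing if there are no `i < j < k < l` with `i, k` in one block
and `j, l` in a different block. -/
def NonCrossingOn (C : Set (Set ℕ)) : Prop :=
  ¬ ∃ i j k l : ℕ, i < j ∧ j < k ∧ k < l ∧
      ∃ B ∈ C, ∃ B' ∈ C, B ≠ B' ∧ i ∈ B ∧ k ∈ B ∧ j ∈ B' ∧ l ∈ B'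

/-- The blocks of the interval partition `π⋆` of `{1,…,4d}` into four consecutive
intervals of length `d`. -/
def piStar4 (d : ℕ) : Set (Set ℕ) :=
  {B | ∃ k : ℕ, k < 4 ∧ B = Set.Icc (k * d + 1) ((k + 1) * d)}

/-- `C` respects `π⋆`: every block of `C` contains at most one element from each block of
`π⋆`. -/
def RespectsPiStar4 (d : ℕ) (C : Set (Set ℕ)) : Prop :=
  ∀ B ∈ C, ∀ c ∈ piStar4 d, (B ∩ c).Subsingleton

/-- The partition `ρ_h` (`1 ≤ h ≤ d`) of `{1,…,4d}`: one 4-block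
`{h, 2d-h+1, 2d+h, 4d-h+1}`, together with the 2-blocks `{j, 2d-j+1}` and
`{2d+j, 4d-j+1}` for `h+1 ≤ j ≤ d`, and the 2-blocks `{j, 4d-j+1}` and `{2d-j+1, 2d+j}`
for `1 ≤ j ≤ h-1`. -/
def rho (d h : ℕ) : Set (Set ℕ) :=
  {B | B = ({h, 2 * d - h + 1, 2 * d + h, 4 * d - h + 1} : Set ℕ) ∨
    (∃ j, h + 1 ≤ j ∧ j ≤ d ∧
      (B = ({j, 2 * d - j + 1} : Set ℕ) ∨ B = ({2 * d + j, 4 * d - j + 1} : Set ℕ))) ∨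
    (∃ j, 1 ≤ j ∧ j ≤ h - 1 ∧
      (B = ({j, 4 * d - j + 1} : Set ℕ) ∨ B = ({2 * d - j + 1, 2 * d + j} : Set ℕ)))}

/- ## small set-cardinality helpers -/

lemma sub_ncard_le_one {B : Set ℕ} (h : B.Subsingleton) : B.ncard ≤ 1 := by
  rcases h.eq_empty_or_singleton with rfl | ⟨x, rfl⟩ <;> simp

lemma card_le_two_of {B A1 A2 : Set ℕ} (h1 : (B ∩ A1).Subsingleton)
    (h2 : (B ∩ A2).Subsingleton) (hsub : B ⊆ A1 ∪ A2) : B.ncard ≤ 2 := by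
  have hB : B = (B ∩ A1) ∪ (B ∩ A2) := by
    ext x; constructor
    · intro hx; rcases hsub hx with h | h
      · exact Or.inl ⟨hx, h⟩
      · exact Or.inr ⟨hx, h⟩
    · rintro (⟨hx, _⟩ | ⟨hx, _⟩) <;> exact hx
  calc B.ncard = ((B ∩ A1) ∪ (B ∩ A2)).ncard := by rw [← hB]
    _ ≤ (B ∩ A1).ncard + (B ∩ A2).ncard := Set.ncard_union_le _ _
    _ ≤ 2 := by have := sub_ncard_le_one h1; have := sub_ncard_le_one h2; omega

lemma card_le_three_of {B A1 A2 A3 : Set ℕ} (h1 : (B ∩ A1).Subsingleton)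
    (h2 : (B ∩ A2).Subsingleton) (h3 : (B ∩ A3).Subsingleton)
    (hsub : B ⊆ A1 ∪ A2 ∪ A3) : B.ncard ≤ 3 := by
  have hB : B = (B ∩ A1) ∪ (B ∩ A2) ∪ (B ∩ A3) := by
    ext x; constructor
    · intro hx; rcases hsub hx with (h | h) | h
      · exact Or.inl (Or.inl ⟨hx, h⟩)
      · exact Or.inl (Or.inr ⟨hx, h⟩)
      · exact Or.inr ⟨hx, h⟩
    · rintro ((⟨hx, _⟩ | ⟨hx, _⟩) | ⟨hx, _⟩) <;> exact hx
  calc B.ncard = ((B ∩ A1) ∪ (B ∩ A2) ∪ (B ∩ A3)).ncard := by rw [← hB]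
    _ ≤ ((B ∩ A1) ∪ (B ∩ A2)).ncard + (B ∩ A3).ncard := Set.ncard_union_le _ _
    _ ≤ (B ∩ A1).ncard + (B ∩ A2).ncard + (B ∩ A3).ncard := by
        have := Set.ncard_union_le (B ∩ A1) (B ∩ A2); omega
    _ ≤ 3 := by
        have := sub_ncard_le_one h1; have := sub_ncard_le_one h2
        have := sub_ncard_le_one h3; omega

lemma card_le_one_of {B A : Set ℕ} (h1 : (B ∩ A).Subsingleton) (hsub : B ⊆ A) :
    B.ncard ≤ 1 := by
  have : B ⊆ B ∩ A := fun x hx => ⟨hx, hsub hx⟩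
  have hBB : B = B ∩ A := subset_antisymm this Set.inter_subset_left
  rw [hBB]; exact sub_ncard_le_one h1

lemma pair_mem {B : Set ℕ} {x : ℕ} (h2 : B.ncard = 2) (hx : x ∈ B) :
    ∃ y, y ≠ x ∧ B = {x, y} := by
  obtain ⟨u, v, huv, rfl⟩ := Set.ncard_eq_two.mp h2
  rcases hx with rfl | rfl
  · exact ⟨v, fun h => huv h.symm, rfl⟩
  · exact ⟨u, huv, Set.pair_comm u x⟩

lemma fourset_ncard {d h : ℕ} (hd : 2 ≤ d) (h1 : 1 ≤ h) (h2 : h ≤ d) :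
    ({h, 2 * d - h + 1, 2 * d + h, 4 * d - h + 1} : Set ℕ).ncard = 4 := by
  rw [Set.ncard_insert_of_notMem (by simp; omega),
      Set.ncard_insert_of_notMem (by simp; omega),
      Set.ncard_pair (by omega)]

/- ## properties of rho -/

lemma rho_cover {d h : ℕ} (hd : 2 ≤ d) (h1 : 1 ≤ h) (h2 : h ≤ d) :
    ∀ x, 1 ≤ x → x ≤ 4 * d → ∃ B ∈ rho d h, x ∈ B := by
  intro x hx1 hx2
  rcases le_or_gt x d with hI | hI
  · rcases lt_trichotomy x h with hxh | rfl | hxh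
    · exact ⟨{x, 4 * d - x + 1}, Or.inr (Or.inr ⟨x, by omega, by omega, Or.inl rfl⟩),
        by simp⟩
    · exact ⟨_, Or.inl rfl, by simp⟩
    · exact ⟨{x, 2 * d - x + 1}, Or.inr (Or.inl ⟨x, by omega, by omega, Or.inl rfl⟩),
        by simp⟩
  rcases le_or_gt x (2 * d) with hI2 | hI2
  · rcases lt_trichotomy x (2 * d - h + 1) with hxh | hxh | hxh
    · exact ⟨{2 * d - x + 1, 2 * d - (2 * d - x + 1) + 1},
        Or.inr (Or.inl ⟨2 * d - x + 1, by omega, by omega, Or.inl rfl⟩), by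
          simp only [Set.mem_insert_iff, Set.mem_singleton_iff]; omega⟩
    · exact ⟨_, Or.inl rfl, by
        simp only [Set.mem_insert_iff, Set.mem_singleton_iff]; omega⟩
    · exact ⟨{2 * d - (2 * d - x + 1) + 1, 2 * d + (2 * d - x + 1)},
        Or.inr (Or.inr ⟨2 * d - x + 1, by omega, by omega, Or.inr rfl⟩), by
          simp only [Set.mem_insert_iff, Set.mem_singleton_iff]; omega⟩
  rcases le_or_gt x (3 * d) with hI3 | hI3
  · rcases lt_trichotomy x (2 * d + h) with hxh | hxh | hxh
    · exact ⟨{2 * d - (x - 2 * d) + 1, 2 * d + (x - 2 * d)},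
        Or.inr (Or.inr ⟨x - 2 * d, by omega, by omega, Or.inr rfl⟩), by
          simp only [Set.mem_insert_iff, Set.mem_singleton_iff]; omega⟩
    · exact ⟨_, Or.inl rfl, by
        simp only [Set.mem_insert_iff, Set.mem_singleton_iff]; omega⟩
    · exact ⟨{2 * d + (x - 2 * d), 4 * d - (x - 2 * d) + 1},
        Or.inr (Or.inl ⟨x - 2 * d, by omega, by omega, Or.inr rfl⟩), by
          simp only [Set.mem_insert_iff, Set.mem_singleton_iff]; omega⟩
  · rcases lt_trichotomy x (4 * d - h + 1) with hxh | hxh | hxh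
    · exact ⟨{2 * d + (4 * d - x + 1), 4 * d - (4 * d - x + 1) + 1},
        Or.inr (Or.inl ⟨4 * d - x + 1, by omega, by omega, Or.inr rfl⟩), by
          simp only [Set.mem_insert_iff, Set.mem_singleton_iff]; omega⟩
    · exact ⟨_, Or.inl rfl, by
        simp only [Set.mem_insert_iff, Set.mem_singleton_iff]; omega⟩
    · exact ⟨{4 * d - x + 1, 4 * d - (4 * d - x + 1) + 1},
        Or.inr (Or.inr ⟨4 * d - x + 1, by omega, by omega, Or.inl rfl⟩), by
          simp only [Set.mem_insert_iff, Set.mem_singleton_iff]; omega⟩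

lemma rho_uniq {d h : ℕ} (hd : 2 ≤ d) (h1 : 1 ≤ h) (h2 : h ≤ d) :
    ∀ B ∈ rho d h, ∀ B' ∈ rho d h, ∀ x, x ∈ B → x ∈ B' → B = B' := by
  intro B hB B' hB' x hxB hxB'
  simp only [rho, Set.mem_setOf_eq] at hB hB'
  rcases hB with rfl | ⟨j, hj1, hj2, rfl | rfl⟩ | ⟨j, hj1, hj2, rfl | rfl⟩ <;>
    rcases hB' with rfl | ⟨j', hj'1, hj'2, rfl | rfl⟩ | ⟨j', hj'1, hj'2, rfl | rfl⟩ <;>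
    simp only [Set.mem_insert_iff, Set.mem_singleton_iff] at hxB hxB' <;>
    first
      | rfl
      | (exfalso; omega)
      | (have hjj : j = j' := (by omega : j = j'); subst hjj; rfl)

lemma rho_partition {d h : ℕ} (hd : 2 ≤ d) (h1 : 1 ≤ h) (h2 : h ≤ d) :
    IsPartitionOn (Set.Icc 1 (4 * d)) (rho d h) := by
  constructor
  · intro B hB
    simp only [rho, Set.mem_setOf_eq] at hB
    rcases hB with rfl | ⟨j, hj1, hj2, rfl | rfl⟩ | ⟨j, hj1, hj2, rfl | rfl⟩ <;>
      refine ⟨fun x hx => ?_, ⟨_, Set.mem_insert _ _⟩⟩ <;>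
      simp only [Set.mem_insert_iff, Set.mem_singleton_iff] at hx <;>
      simp only [Set.mem_Icc] <;> omega
  · intro x hx
    simp only [Set.mem_Icc] at hx
    obtain ⟨B, hB, hxB⟩ := rho_cover hd h1 h2 x hx.1 hx.2
    exact ⟨B, ⟨hB, hxB⟩, fun B' ⟨hB', hxB'⟩ => rho_uniq hd h1 h2 B' hB' B hB x hxB' hxB⟩

lemma rho_nc {d h : ℕ} (hd : 2 ≤ d) (h1 : 1 ≤ h) (h2 : h ≤ d) :
    NonCrossingOn (rho d h) := by
  rintro ⟨i1, i2, i3, i4, h12, h23, h34, B, hB, B', hB', hne, hiB, hkB, hjB', hlB'⟩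
  simp only [rho, Set.mem_setOf_eq] at hB hB'
  rcases hB with rfl | ⟨j, hj1, hj2, rfl | rfl⟩ | ⟨j, hj1, hj2, rfl | rfl⟩ <;>
    rcases hB' with rfl | ⟨j', hj'1, hj'2, rfl | rfl⟩ | ⟨j', hj'1, hj'2, rfl | rfl⟩ <;>
    simp only [Set.mem_insert_iff, Set.mem_singleton_iff] at hiB hkB hjB' hlB' <;>
    first
      | exact hne rfl
      | omega

lemma rho_resp {d h : ℕ} (hd : 2 ≤ d) (h1 : 1 ≤ h) (h2 : h ≤ d) :
    RespectsPiStar4 d (rho d h) := by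
  intro B hB c hc
  obtain ⟨k, hk, rfl⟩ := hc
  intro x hx y hy
  simp only [rho, Set.mem_setOf_eq] at hB
  obtain ⟨hxB, hxI⟩ := hx
  obtain ⟨hyB, hyI⟩ := hy
  simp only [Set.mem_Icc] at hxI hyI
  interval_cases k <;>
  (rcases hB with rfl | ⟨j, hj1, hj2, rfl | rfl⟩ | ⟨j, hj1, hj2, rfl | rfl⟩ <;>
    simp only [Set.mem_insert_iff, Set.mem_singleton_iff] at hxB hyB <;> omega)

lemma rho_sizes {d h : ℕ} (hd : 2 ≤ d) (h1 : 1 ≤ h) (h2 : h ≤ d) :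
    ∀ B ∈ rho d h, B.ncard = 2 ∨ B.ncard = 4 := by
  intro B hB
  rcases hB with rfl | ⟨j, hj1, hj2, rfl | rfl⟩ | ⟨j, hj1, hj2, rfl | rfl⟩
  · exact Or.inr (fourset_ncard hd h1 h2)
  all_goals exact Or.inl (Set.ncard_pair (by omega))


section Hard

variable {d : ℕ} {C : Set (Set ℕ)}

lemma uniq_block (hpart : IsPartitionOn (Set.Icc 1 (4 * d)) C) {B B' : Set ℕ}
    (hB : B ∈ C) (hB' : B' ∈ C) {x : ℕ} (hx : x ∈ B) (hx' : x ∈ B') : B = B' := by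
  have hxS : x ∈ Set.Icc 1 (4 * d) := (hpart.1 B hB).1 hx
  obtain ⟨U, -, hU⟩ := hpart.2 x hxS
  rw [hU B ⟨hB, hx⟩, hU B' ⟨hB', hx'⟩]

lemma resp_same (hresp : RespectsPiStar4 d C) {B : Set ℕ} (hB : B ∈ C) {x y k : ℕ}
    (hx : x ∈ B) (hy : y ∈ B) (hk : k < 4) (hx1 : k * d + 1 ≤ x) (hx2 : x ≤ (k + 1) * d)
    (hy1 : k * d + 1 ≤ y) (hy2 : y ≤ (k + 1) * d) : x = y :=
  hresp B hB _ ⟨k, hk, rfl⟩ ⟨hx, Set.mem_Icc.mpr ⟨hx1, hx2⟩⟩ ⟨hy, Set.mem_Icc.mpr ⟨hy1, hy2⟩⟩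

lemma nc_cross (hNC : NonCrossingOn C) {B B' : Set ℕ} (hB : B ∈ C) (hB' : B' ∈ C)
    (hne : B ≠ B') {i j k l : ℕ} (hi : i ∈ B) (hk : k ∈ B) (hj : j ∈ B') (hl : l ∈ B')
    (h1 : i < j) (h2 : j < k) (h3 : k < l) : False :=
  hNC ⟨i, j, k, l, h1, h2, h3, B, hB, B', hB', hne, hi, hk, hj, hl⟩

lemma no_single (hresp : RespectsPiStar4 d C) (hcard : ∀ B ∈ C, B.ncard = 2 ∨ B.ncard = 4)
    {B : Set ℕ} (hB : B ∈ C) {k : ℕ} (hk : k < 4)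
    (hsub : ∀ u ∈ B, k * d + 1 ≤ u ∧ u ≤ (k + 1) * d) : False := by
  have h1 := card_le_one_of (hresp B hB _ ⟨k, hk, rfl⟩)
    (fun u hu => Set.mem_Icc.mpr (hsub u hu))
  rcases hcard B hB with h | h <;> omega

lemma pair_of_two (hresp : RespectsPiStar4 d C) (hcard : ∀ B ∈ C, B.ncard = 2 ∨ B.ncard = 4)
    {B : Set ℕ} (hB : B ∈ C) {x : ℕ} (hx : x ∈ B) {k1 k2 : ℕ} (hk1 : k1 < 4) (hk2 : k2 < 4)
    (hsub : ∀ u ∈ B, (k1 * d + 1 ≤ u ∧ u ≤ (k1 + 1) * d) ∨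
      (k2 * d + 1 ≤ u ∧ u ≤ (k2 + 1) * d)) :
    ∃ y, y ≠ x ∧ B = {x, y} := by
  have h2 : B.ncard ≤ 2 := by
    refine card_le_two_of (hresp B hB _ ⟨k1, hk1, rfl⟩) (hresp B hB _ ⟨k2, hk2, rfl⟩) ?_
    intro u hu
    rcases hsub u hu with h | h
    · exact Or.inl (Set.mem_Icc.mpr h)
    · exact Or.inr (Set.mem_Icc.mpr h)
  have h2' : B.ncard = 2 := by rcases hcard B hB with h | h <;> omega
  exact pair_mem h2' hx

lemma sandwich (hpart : IsPartitionOn (Set.Icc 1 (4 * d)) C) (hNC : NonCrossingOn C)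
    {D : Set ℕ} (hD : D ∈ C) {p q : ℕ} (hp : p ∈ D) (hq : q ∈ D)
    {Bx : Set ℕ} (hBx : Bx ∈ C) (hne : Bx ≠ D) {x : ℕ} (hx : x ∈ Bx)
    (hpx : p < x) (hxq : x < q) : ∀ u ∈ Bx, p < u ∧ u < q := by
  intro u hu
  constructor
  · rcases lt_trichotomy u p with h | h | h
    · exact (nc_cross hNC hBx hD hne hu hx hp hq h hpx hxq).elim
    · exact (hne (uniq_block hpart hBx hD (h ▸ hu) hp)).elim
    · exact h
  · rcases lt_trichotomy u q with h | h | h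
    · exact h
    · exact (hne (uniq_block hpart hBx hD (h ▸ hu) hq)).elim
    · exact (nc_cross hNC hD hBx (Ne.symm hne) hp hq hx hu hpx hxq h).elim

lemma hard (hd : 2 ≤ d) (hpart : IsPartitionOn (Set.Icc 1 (4 * d)) C)
    (hNC : NonCrossingOn C) (hresp : RespectsPiStar4 d C)
    (hcard : ∀ B ∈ C, B.ncard = 2 ∨ B.ncard = 4)
    {B0 : Set ℕ} (hB0 : B0 ∈ C) (hB04 : B0.ncard = 4) :
    ∃ h, 1 ≤ h ∧ h ≤ d ∧ C = rho d h := by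
  have bnd : ∀ {B : Set ℕ}, B ∈ C → ∀ u ∈ B, 1 ≤ u ∧ u ≤ 4 * d :=
    fun hB u hu => Set.mem_Icc.mp ((hpart.1 _ hB).1 hu)
  have getB : ∀ x, 1 ≤ x → x ≤ 4 * d → ∃ B, B ∈ C ∧ x ∈ B := by
    intro x h1 h2
    obtain ⟨B, ⟨hB, hxB⟩, -⟩ := hpart.2 x (Set.mem_Icc.mpr ⟨h1, h2⟩)
    exact ⟨B, hB, hxB⟩
  -- B0 has an element in each of the four intervals
  have hexk : ∀ k, k < 4 → ∃ x ∈ B0, k * d + 1 ≤ x ∧ x ≤ (k + 1) * d := by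
    intro k hk
    by_contra hcon
    push_neg at hcon
    have hle3 : B0.ncard ≤ 3 := by
      interval_cases k
      · refine card_le_three_of (hresp B0 hB0 _ ⟨1, by norm_num, rfl⟩)
          (hresp B0 hB0 _ ⟨2, by norm_num, rfl⟩) (hresp B0 hB0 _ ⟨3, by norm_num, rfl⟩) ?_
        intro u hu
        have h1 := bnd hB0 u hu
        have h2 := hcon u hu
        simp only [Set.mem_union, Set.mem_Icc]
        omega
      · refine card_le_three_of (hresp B0 hB0 _ ⟨0, by norm_num, rfl⟩)
          (hresp B0 hB0 _ ⟨2, by norm_num, rfl⟩) (hresp B0 hB0 _ ⟨3, by norm_num, rfl⟩) ?_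
        intro u hu
        have h1 := bnd hB0 u hu
        have h2 := hcon u hu
        simp only [Set.mem_union, Set.mem_Icc]
        omega
      · refine card_le_three_of (hresp B0 hB0 _ ⟨0, by norm_num, rfl⟩)
          (hresp B0 hB0 _ ⟨1, by norm_num, rfl⟩) (hresp B0 hB0 _ ⟨3, by norm_num, rfl⟩) ?_
        intro u hu
        have h1 := bnd hB0 u hu
        have h2 := hcon u hu
        simp only [Set.mem_union, Set.mem_Icc]
        omega
      · refine card_le_three_of (hresp B0 hB0 _ ⟨0, by norm_num, rfl⟩)
          (hresp B0 hB0 _ ⟨1, by norm_num, rfl⟩) (hresp B0 hB0 _ ⟨2, by norm_num, rfl⟩) ?_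
        intro u hu
        have h1 := bnd hB0 u hu
        have h2 := hcon u hu
        simp only [Set.mem_union, Set.mem_Icc]
        omega
    omega
  obtain ⟨a, haB, ha1, ha2⟩ := hexk 0 (by norm_num)
  obtain ⟨b, hbB, hb1, hb2⟩ := hexk 1 (by norm_num)
  obtain ⟨c, hcB, hc1, hc2⟩ := hexk 2 (by norm_num)
  obtain ⟨e, heB, he1, he2⟩ := hexk 3 (by norm_num)
  have ha1' : 1 ≤ a := by omega
  have ha2' : a ≤ d := by omega
  have hb1' : d + 1 ≤ b := by omega
  have hb2' : b ≤ 2 * d := by omega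
  have hc1' : 2 * d + 1 ≤ c := by omega
  have hc2' : c ≤ 3 * d := by omega
  have he1' : 3 * d + 1 ≤ e := by omega
  have he2' : e ≤ 4 * d := by omega

  -- ### Region 1: blocks {j, 2d-j+1} for a < j ≤ d
  have step1 : ∀ j, a < j → j ≤ d →
      (∀ j', j < j' → j' ≤ d → ({j', 2 * d - j' + 1} : Set ℕ) ∈ C) →
      ({j, 2 * d - j + 1} : Set ℕ) ∈ C := by
    intro j hj1 hj2 IH
    obtain ⟨Bj, hBj, hjBj⟩ := getB j (by omega) (by omega)
    have hjB0 : j ∉ B0 := by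
      intro hj0
      have := resp_same hresp hB0 hj0 haB (k := 0) (by norm_num)
        (by omega) (by omega) (by omega) (by omega)
      omega
    have hne0 : Bj ≠ B0 := fun heq => hjB0 (heq ▸ hjBj)
    have hrange := sandwich hpart hNC hB0 haB hbB hBj hne0 hjBj (by omega) (by omega)
    obtain ⟨y, hyj, hBjeq⟩ := pair_of_two hresp hcard hBj hjBj (k1 := 0) (k2 := 1)
      (by norm_num) (by norm_num)
      (fun u hu => by have h1 := hrange u hu; have h2 := bnd hBj u hu; omega)
    have hyBj : y ∈ Bj := by rw [hBjeq]; right; rfl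
    have hyr := hrange y hyBj
    have hy2 : d + 1 ≤ y := by
      by_contra hy
      push_neg at hy
      have := resp_same hresp hBj hjBj hyBj (k := 0) (by norm_num)
        (by omega) (by omega) (by omega) (by omega)
      omega
    have hy2' : y ≤ 2 * d := by omega
    have hylow : 2 * d - j + 1 ≤ y := by
      by_contra hy
      push_neg at hy
      have hK := IH (2 * d + 1 - y) (by omega) (by omega)
      have hyK : y ∈ ({2 * d + 1 - y, 2 * d - (2 * d + 1 - y) + 1} : Set ℕ) := by
        simp only [Set.mem_insert_iff, Set.mem_singleton_iff]; omega
      have hBK := uniq_block hpart hBj hK hyBj hyK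
      have hjK : j ∈ ({2 * d + 1 - y, 2 * d - (2 * d + 1 - y) + 1} : Set ℕ) := hBK ▸ hjBj
      simp only [Set.mem_insert_iff, Set.mem_singleton_iff] at hjK
      omega
    have hyeq : y = 2 * d - j + 1 := by
      by_contra hy
      have hylt : 2 * d - j + 1 < y := by omega
      obtain ⟨Bw, hBw, hwBw⟩ := getB (2 * d - j + 1) (by omega) (by omega)
      have hwBj : (2 * d - j + 1) ∉ Bj := by
        rw [hBjeq]
        simp only [Set.mem_insert_iff, Set.mem_singleton_iff]
        omega
      have hneJ : Bw ≠ Bj := fun heq => hwBj (heq ▸ hwBw)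
      have hrw := sandwich hpart hNC hBj hjBj hyBj hBw hneJ hwBw (by omega) (by omega)
      have hrw1 : ∀ u ∈ Bw, d + 1 ≤ u := by
        intro u hu
        by_contra hud
        push_neg at hud
        have h1 := (hrw u hu).1
        have hK := IH u (by omega) (by omega)
        have hBwK := uniq_block hpart hBw hK hu (by left; rfl)
        have hwK : (2 * d - j + 1) ∈ ({u, 2 * d - u + 1} : Set ℕ) := hBwK ▸ hwBw
        simp only [Set.mem_insert_iff, Set.mem_singleton_iff] at hwK
        omega
      exact no_single hresp hcard hBw (k := 1) (by norm_num)
        (fun u hu => by have h1 := hrw1 u hu; have h2 := (hrw u hu).2; omega)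
    rw [hyeq] at hBjeq
    rw [← hBjeq]
    exact hBj
  have key1 : ∀ j, a < j → j ≤ d → ({j, 2 * d - j + 1} : Set ℕ) ∈ C := by
    have H : ∀ n j, d - j ≤ n → a < j → j ≤ d → ({j, 2 * d - j + 1} : Set ℕ) ∈ C := by
      intro n
      induction n with
      | zero => exact fun j hn h1 h2 => step1 j h1 h2 (fun j' hj1 hj2 => (by omega : False).elim)
      | succ n ih =>
          intro j hn h1 h2
          exact step1 j h1 h2 (fun j' hj1 hj2 => ih j' (by omega) (by omega) hj2)
    exact fun j h1 h2 => H (d - j) j le_rfl h1 h2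
  have hbval : b = 2 * d - a + 1 := by
    have hble : 2 * d - a + 1 ≤ b := by
      by_contra hb'
      push_neg at hb'
      have hK := key1 (2 * d + 1 - b) (by omega) (by omega)
      have hbK : b ∈ ({2 * d + 1 - b, 2 * d - (2 * d + 1 - b) + 1} : Set ℕ) := by
        simp only [Set.mem_insert_iff, Set.mem_singleton_iff]; omega
      have hBK := uniq_block hpart hB0 hK hbB hbK
      have haK : a ∈ ({2 * d + 1 - b, 2 * d - (2 * d + 1 - b) + 1} : Set ℕ) := hBK ▸ haB
      simp only [Set.mem_insert_iff, Set.mem_singleton_iff] at haK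
      omega
    by_contra hb'
    have hblt : 2 * d - a + 1 < b := by omega
    obtain ⟨Bw, hBw, hwBw⟩ := getB (2 * d - a + 1) (by omega) (by omega)
    have hwB0 : (2 * d - a + 1) ∉ B0 := by
      intro hw
      have := resp_same hresp hB0 hw hbB (k := 1) (by norm_num)
        (by omega) (by omega) (by omega) (by omega)
      omega
    have hne0 : Bw ≠ B0 := fun heq => hwB0 (heq ▸ hwBw)
    have hrw := sandwich hpart hNC hB0 haB hbB hBw hne0 hwBw (by omega) (by omega)
    have hrw1 : ∀ u ∈ Bw, d + 1 ≤ u := by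
      intro u hu
      by_contra hud
      push_neg at hud
      have h1 := (hrw u hu).1
      have hK := key1 u (by omega) (by omega)
      have hBwK := uniq_block hpart hBw hK hu (by left; rfl)
      have hwK : (2 * d - a + 1) ∈ ({u, 2 * d - u + 1} : Set ℕ) := hBwK ▸ hwBw
      simp only [Set.mem_insert_iff, Set.mem_singleton_iff] at hwK
      omega
    exact no_single hresp hcard hBw (k := 1) (by norm_num)
      (fun u hu => by have h1 := hrw1 u hu; have h2 := (hrw u hu).2; omega)

  -- ### Region 2: blocks {2d-j+1, 2d+j} for 1 ≤ j ≤ a-1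
  have step2 : ∀ j, 1 ≤ j → j ≤ a - 1 →
      (∀ j', 1 ≤ j' → j' < j → ({2 * d - j' + 1, 2 * d + j'} : Set ℕ) ∈ C) →
      ({2 * d - j + 1, 2 * d + j} : Set ℕ) ∈ C := by
    intro j hj1 hj2 IH
    obtain ⟨Bx, hBx, hxBx⟩ := getB (2 * d - j + 1) (by omega) (by omega)
    have hxB0 : (2 * d - j + 1) ∉ B0 := by
      intro hx0
      have := resp_same hresp hB0 hx0 hbB (k := 1) (by norm_num)
        (by omega) (by omega) (by omega) (by omega)
      omega
    have hne0 : Bx ≠ B0 := fun heq => hxB0 (heq ▸ hxBx)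
    have hrange := sandwich hpart hNC hB0 hbB hcB hBx hne0 hxBx (by omega) (by omega)
    obtain ⟨y, hyx, hBxeq⟩ := pair_of_two hresp hcard hBx hxBx (k1 := 1) (k2 := 2)
      (by norm_num) (by norm_num)
      (fun u hu => by have h1 := hrange u hu; have h2 := bnd hBx u hu; omega)
    have hyBx : y ∈ Bx := by rw [hBxeq]; right; rfl
    have hyr := hrange y hyBx
    have hy3 : 2 * d + 1 ≤ y := by
      by_contra hy
      push_neg at hy
      have := resp_same hresp hBx hxBx hyBx (k := 1) (by norm_num)
        (by omega) (by omega) (by omega) (by omega)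
      omega
    have hylow : 2 * d + j ≤ y := by
      by_contra hy
      push_neg at hy
      have hK := IH (y - 2 * d) (by omega) (by omega)
      have hyK : y ∈ ({2 * d - (y - 2 * d) + 1, 2 * d + (y - 2 * d)} : Set ℕ) := by
        simp only [Set.mem_insert_iff, Set.mem_singleton_iff]; omega
      have hBK := uniq_block hpart hBx hK hyBx hyK
      have hxK : (2 * d - j + 1) ∈
          ({2 * d - (y - 2 * d) + 1, 2 * d + (y - 2 * d)} : Set ℕ) := hBK ▸ hxBx
      simp only [Set.mem_insert_iff, Set.mem_singleton_iff] at hxK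
      omega
    have hyeq : y = 2 * d + j := by
      by_contra hy
      have hylt : 2 * d + j < y := by omega
      obtain ⟨Bw, hBw, hwBw⟩ := getB (2 * d + j) (by omega) (by omega)
      have hwBx : (2 * d + j) ∉ Bx := by
        rw [hBxeq]
        simp only [Set.mem_insert_iff, Set.mem_singleton_iff]
        omega
      have hneX : Bw ≠ Bx := fun heq => hwBx (heq ▸ hwBw)
      have hrw := sandwich hpart hNC hBx hxBx hyBx hBw hneX hwBw (by omega) (by omega)
      have hrw1 : ∀ u ∈ Bw, 2 * d + 1 ≤ u := by
        intro u hu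
        by_contra hud
        push_neg at hud
        have h1 := (hrw u hu).1
        have hK := IH (2 * d + 1 - u) (by omega) (by omega)
        have huK : u ∈ ({2 * d - (2 * d + 1 - u) + 1, 2 * d + (2 * d + 1 - u)} : Set ℕ) := by
          simp only [Set.mem_insert_iff, Set.mem_singleton_iff]; omega
        have hBwK := uniq_block hpart hBw hK hu huK
        have hwK : (2 * d + j) ∈
            ({2 * d - (2 * d + 1 - u) + 1, 2 * d + (2 * d + 1 - u)} : Set ℕ) := hBwK ▸ hwBw
        simp only [Set.mem_insert_iff, Set.mem_singleton_iff] at hwK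
        omega
      exact no_single hresp hcard hBw (k := 2) (by norm_num)
        (fun u hu => by have h1 := hrw1 u hu; have h2 := (hrw u hu).2; omega)
    rw [hyeq] at hBxeq
    rw [← hBxeq]
    exact hBx
  have key2 : ∀ j, 1 ≤ j → j ≤ a - 1 → ({2 * d - j + 1, 2 * d + j} : Set ℕ) ∈ C := by
    have H : ∀ n j, j ≤ n → 1 ≤ j → j ≤ a - 1 →
        ({2 * d - j + 1, 2 * d + j} : Set ℕ) ∈ C := by
      intro n
      induction n with
      | zero => exact fun j hn h1 h2 => (by omega : False).elim
      | succ n ih =>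
          intro j hn h1 h2
          exact step2 j h1 h2 (fun j' hj1 hj2 => ih j' (by omega) hj1 (by omega))
    exact fun j h1 h2 => H j j le_rfl h1 h2
  have hcval : c = 2 * d + a := by
    have hcle : 2 * d + a ≤ c := by
      by_contra hc'
      push_neg at hc'
      have hK := key2 (c - 2 * d) (by omega) (by omega)
      have hcK : c ∈ ({2 * d - (c - 2 * d) + 1, 2 * d + (c - 2 * d)} : Set ℕ) := by
        simp only [Set.mem_insert_iff, Set.mem_singleton_iff]; omega
      have hBK := uniq_block hpart hB0 hK hcB hcK
      have haK : a ∈ ({2 * d - (c - 2 * d) + 1, 2 * d + (c - 2 * d)} : Set ℕ) := hBK ▸ haB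
      simp only [Set.mem_insert_iff, Set.mem_singleton_iff] at haK
      omega
    by_contra hc'
    have hclt : 2 * d + a < c := by omega
    obtain ⟨Bw, hBw, hwBw⟩ := getB (2 * d + a) (by omega) (by omega)
    have hwB0 : (2 * d + a) ∉ B0 := by
      intro hw
      have := resp_same hresp hB0 hw hcB (k := 2) (by norm_num)
        (by omega) (by omega) (by omega) (by omega)
      omega
    have hne0 : Bw ≠ B0 := fun heq => hwB0 (heq ▸ hwBw)
    have hrw := sandwich hpart hNC hB0 hbB hcB hBw hne0 hwBw (by omega) (by omega)
    have hrw1 : ∀ u ∈ Bw, 2 * d + 1 ≤ u := by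
      intro u hu
      by_contra hud
      push_neg at hud
      have h1 := (hrw u hu).1
      have hK := key2 (2 * d + 1 - u) (by omega) (by omega)
      have huK : u ∈ ({2 * d - (2 * d + 1 - u) + 1, 2 * d + (2 * d + 1 - u)} : Set ℕ) := by
        simp only [Set.mem_insert_iff, Set.mem_singleton_iff]; omega
      have hBwK := uniq_block hpart hBw hK hu huK
      have hwK : (2 * d + a) ∈
          ({2 * d - (2 * d + 1 - u) + 1, 2 * d + (2 * d + 1 - u)} : Set ℕ) := hBwK ▸ hwBw
      simp only [Set.mem_insert_iff, Set.mem_singleton_iff] at hwK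
      omega
    exact no_single hresp hcard hBw (k := 2) (by norm_num)
      (fun u hu => by have h1 := hrw1 u hu; have h2 := (hrw u hu).2; omega)
  -- ### Region 3: blocks {2d+j, 4d-j+1} for a < j ≤ d
  have step3 : ∀ j, a < j → j ≤ d →
      (∀ j', j < j' → j' ≤ d → ({2 * d + j', 4 * d - j' + 1} : Set ℕ) ∈ C) →
      ({2 * d + j, 4 * d - j + 1} : Set ℕ) ∈ C := by
    intro j hj1 hj2 IH
    obtain ⟨Bx, hBx, hxBx⟩ := getB (2 * d + j) (by omega) (by omega)
    have hxB0 : (2 * d + j) ∉ B0 := by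
      intro hx0
      have := resp_same hresp hB0 hx0 hcB (k := 2) (by norm_num)
        (by omega) (by omega) (by omega) (by omega)
      omega
    have hne0 : Bx ≠ B0 := fun heq => hxB0 (heq ▸ hxBx)
    have hrange := sandwich hpart hNC hB0 hcB heB hBx hne0 hxBx (by omega) (by omega)
    obtain ⟨y, hyx, hBxeq⟩ := pair_of_two hresp hcard hBx hxBx (k1 := 2) (k2 := 3)
      (by norm_num) (by norm_num)
      (fun u hu => by have h1 := hrange u hu; have h2 := bnd hBx u hu; omega)
    have hyBx : y ∈ Bx := by rw [hBxeq]; right; rfl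
    have hyr := hrange y hyBx
    have hy4 : 3 * d + 1 ≤ y := by
      by_contra hy
      push_neg at hy
      have := resp_same hresp hBx hxBx hyBx (k := 2) (by norm_num)
        (by omega) (by omega) (by omega) (by omega)
      omega
    have hylow : 4 * d - j + 1 ≤ y := by
      by_contra hy
      push_neg at hy
      have hK := IH (4 * d + 1 - y) (by omega) (by omega)
      have hyK : y ∈ ({2 * d + (4 * d + 1 - y), 4 * d - (4 * d + 1 - y) + 1} : Set ℕ) := by
        simp only [Set.mem_insert_iff, Set.mem_singleton_iff]; omega
      have hBK := uniq_block hpart hBx hK hyBx hyK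
      have hxK : (2 * d + j) ∈
          ({2 * d + (4 * d + 1 - y), 4 * d - (4 * d + 1 - y) + 1} : Set ℕ) := hBK ▸ hxBx
      simp only [Set.mem_insert_iff, Set.mem_singleton_iff] at hxK
      omega
    have hyeq : y = 4 * d - j + 1 := by
      by_contra hy
      have hylt : 4 * d - j + 1 < y := by omega
      obtain ⟨Bw, hBw, hwBw⟩ := getB (4 * d - j + 1) (by omega) (by omega)
      have hwBx : (4 * d - j + 1) ∉ Bx := by
        rw [hBxeq]
        simp only [Set.mem_insert_iff, Set.mem_singleton_iff]
        omega
      have hneX : Bw ≠ Bx := fun heq => hwBx (heq ▸ hwBw)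
      have hrw := sandwich hpart hNC hBx hxBx hyBx hBw hneX hwBw (by omega) (by omega)
      have hrw1 : ∀ u ∈ Bw, 3 * d + 1 ≤ u := by
        intro u hu
        by_contra hud
        push_neg at hud
        have h1 := (hrw u hu).1
        have hK := IH (u - 2 * d) (by omega) (by omega)
        have huK : u ∈ ({2 * d + (u - 2 * d), 4 * d - (u - 2 * d) + 1} : Set ℕ) := by
          simp only [Set.mem_insert_iff, Set.mem_singleton_iff]; omega
        have hBwK := uniq_block hpart hBw hK hu huK
        have hwK : (4 * d - j + 1) ∈
            ({2 * d + (u - 2 * d), 4 * d - (u - 2 * d) + 1} : Set ℕ) := hBwK ▸ hwBw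
        simp only [Set.mem_insert_iff, Set.mem_singleton_iff] at hwK
        omega
      exact no_single hresp hcard hBw (k := 3) (by norm_num)
        (fun u hu => by
          have h1 := hrw1 u hu
          have h2 := (hrw u hu).2
          have h3 := bnd hBw u hu
          omega)
    rw [hyeq] at hBxeq
    rw [← hBxeq]
    exact hBx
  have key3 : ∀ j, a < j → j ≤ d → ({2 * d + j, 4 * d - j + 1} : Set ℕ) ∈ C := by
    have H : ∀ n j, d - j ≤ n → a < j → j ≤ d →
        ({2 * d + j, 4 * d - j + 1} : Set ℕ) ∈ C := by
      intro n
      induction n with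
      | zero =>
          intro j hn h1 h2
          exact step3 j h1 h2 (fun j' hj1 hj2 => (by omega : False).elim)
      | succ n ih =>
          intro j hn h1 h2
          exact step3 j h1 h2 (fun j' hj1 hj2 => ih j' (by omega) (by omega) hj2)
    exact fun j h1 h2 => H (d - j) j le_rfl h1 h2
  have heval : e = 4 * d - a + 1 := by
    have hele : 4 * d - a + 1 ≤ e := by
      by_contra he'
      push_neg at he'
      have hK := key3 (4 * d + 1 - e) (by omega) (by omega)
      have heK : e ∈ ({2 * d + (4 * d + 1 - e), 4 * d - (4 * d + 1 - e) + 1} : Set ℕ) := by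
        simp only [Set.mem_insert_iff, Set.mem_singleton_iff]; omega
      have hBK := uniq_block hpart hB0 hK heB heK
      have haK : a ∈ ({2 * d + (4 * d + 1 - e), 4 * d - (4 * d + 1 - e) + 1} : Set ℕ) :=
        hBK ▸ haB
      simp only [Set.mem_insert_iff, Set.mem_singleton_iff] at haK
      omega
    by_contra he'
    have helt : 4 * d - a + 1 < e := by omega
    obtain ⟨Bw, hBw, hwBw⟩ := getB (4 * d - a + 1) (by omega) (by omega)
    have hwB0 : (4 * d - a + 1) ∉ B0 := by
      intro hw
      have := resp_same hresp hB0 hw heB (k := 3) (by norm_num)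
        (by omega) (by omega) (by omega) (by omega)
      omega
    have hne0 : Bw ≠ B0 := fun heq => hwB0 (heq ▸ hwBw)
    have hrw := sandwich hpart hNC hB0 hcB heB hBw hne0 hwBw (by omega) (by omega)
    have hrw1 : ∀ u ∈ Bw, 3 * d + 1 ≤ u := by
      intro u hu
      by_contra hud
      push_neg at hud
      have h1 := (hrw u hu).1
      have hK := key3 (u - 2 * d) (by omega) (by omega)
      have huK : u ∈ ({2 * d + (u - 2 * d), 4 * d - (u - 2 * d) + 1} : Set ℕ) := by
        simp only [Set.mem_insert_iff, Set.mem_singleton_iff]; omega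
      have hBwK := uniq_block hpart hBw hK hu huK
      have hwK : (4 * d - a + 1) ∈
          ({2 * d + (u - 2 * d), 4 * d - (u - 2 * d) + 1} : Set ℕ) := hBwK ▸ hwBw
      simp only [Set.mem_insert_iff, Set.mem_singleton_iff] at hwK
      omega
    exact no_single hresp hcard hBw (k := 3) (by norm_num)
      (fun u hu => by
          have h1 := hrw1 u hu
          have h2 := (hrw u hu).2
          have h3 := bnd hBw u hu
          omega)
  -- ### Region 4: blocks {j, 4d-j+1} for 1 ≤ j ≤ a-1
  have step4 : ∀ j, 1 ≤ j → j ≤ a - 1 →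
      (∀ j', 1 ≤ j' → j' < j → ({j', 4 * d - j' + 1} : Set ℕ) ∈ C) →
      ({j, 4 * d - j + 1} : Set ℕ) ∈ C := by
    intro j hj1 hj2 IH
    obtain ⟨Bj, hBj, hjBj⟩ := getB j (by omega) (by omega)
    have hjB0 : j ∉ B0 := by
      intro hj0
      have := resp_same hresp hB0 hj0 haB (k := 0) (by norm_num)
        (by omega) (by omega) (by omega) (by omega)
      omega
    have hne0 : Bj ≠ B0 := fun heq => hjB0 (heq ▸ hjBj)
    have hrange : ∀ u ∈ Bj, u = j ∨ (e < u ∧ u ≤ 4 * d) := by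
      intro u hu
      have hub := bnd hBj u hu
      by_cases hud : u ≤ d
      · left
        exact resp_same hresp hBj hu hjBj (k := 0) (by norm_num)
          (by omega) (by omega) (by omega) (by omega)
      · push_neg at hud
        rcases lt_trichotomy u e with h | h | h
        · exact (nc_cross hNC hBj hB0 hne0 hjBj hu haB heB (by omega) (by omega) h).elim
        · exact (hne0 (uniq_block hpart hBj hB0 (h ▸ hu) heB)).elim
        · exact Or.inr ⟨h, hub.2⟩
    obtain ⟨y, hyj, hBjeq⟩ := pair_of_two hresp hcard hBj hjBj (k1 := 0) (k2 := 3)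
      (by norm_num) (by norm_num)
      (fun u hu => by have h1 := hrange u hu; have h2 := bnd hBj u hu; omega)
    have hyBj : y ∈ Bj := by rw [hBjeq]; right; rfl
    have hyr : e < y ∧ y ≤ 4 * d := by
      rcases hrange y hyBj with h | h
      · exact (hyj h).elim
      · exact h
    have hyup : y ≤ 4 * d - j + 1 := by
      by_contra hy
      push_neg at hy
      have hK := IH (4 * d + 1 - y) (by omega) (by omega)
      have hyK : y ∈ ({4 * d + 1 - y, 4 * d - (4 * d + 1 - y) + 1} : Set ℕ) := by
        simp only [Set.mem_insert_iff, Set.mem_singleton_iff]; omega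
      have hBK := uniq_block hpart hBj hK hyBj hyK
      have hjK : j ∈ ({4 * d + 1 - y, 4 * d - (4 * d + 1 - y) + 1} : Set ℕ) := hBK ▸ hjBj
      simp only [Set.mem_insert_iff, Set.mem_singleton_iff] at hjK
      omega
    have hyeq : y = 4 * d - j + 1 := by
      by_contra hy
      have hylt : y < 4 * d - j + 1 := by omega
      obtain ⟨Bw, hBw, hwBw⟩ := getB (4 * d - j + 1) (by omega) (by omega)
      have hwBj : (4 * d - j + 1) ∉ Bj := by
        rw [hBjeq]
        simp only [Set.mem_insert_iff, Set.mem_singleton_iff]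
        omega
      have hneJ : Bw ≠ Bj := fun heq => hwBj (heq ▸ hwBw)
      have hrw : ∀ u ∈ Bw, u < j ∨ y < u := by
        intro u hu
        rcases lt_trichotomy u j with h | h | h
        · exact Or.inl h
        · exact (hneJ (uniq_block hpart hBw hBj (h ▸ hu) hjBj)).elim
        · rcases lt_trichotomy u y with h2 | h2 | h2
          · exact (nc_cross hNC hBj hBw (Ne.symm hneJ) hjBj hyBj hu hwBw h h2
              (by omega)).elim
          · exact (hneJ (uniq_block hpart hBw hBj (h2 ▸ hu) hyBj)).elim
          · exact Or.inr h2
      have hrw1 : ∀ u ∈ Bw, 3 * d + 1 ≤ u := by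
        intro u hu
        by_contra hud
        push_neg at hud
        have hub := bnd hBw u hu
        rcases hrw u hu with h | h
        · have hK := IH u (by omega) (by omega)
          have hBwK := uniq_block hpart hBw hK hu (by left; rfl)
          have hwK : (4 * d - j + 1) ∈ ({u, 4 * d - u + 1} : Set ℕ) := hBwK ▸ hwBw
          simp only [Set.mem_insert_iff, Set.mem_singleton_iff] at hwK
          omega
        · omega
      exact no_single hresp hcard hBw (k := 3) (by norm_num)
        (fun u hu => by have h1 := hrw1 u hu; have h2 := bnd hBw u hu; omega)
    rw [hyeq] at hBjeq
    rw [← hBjeq]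
    exact hBj
  have key4 : ∀ j, 1 ≤ j → j ≤ a - 1 → ({j, 4 * d - j + 1} : Set ℕ) ∈ C := by
    have H : ∀ n j, j ≤ n → 1 ≤ j → j ≤ a - 1 → ({j, 4 * d - j + 1} : Set ℕ) ∈ C := by
      intro n
      induction n with
      | zero => exact fun j hn h1 h2 => (by omega : False).elim
      | succ n ih =>
          intro j hn h1 h2
          exact step4 j h1 h2 (fun j' hj1 hj2 => ih j' (by omega) hj1 (by omega))
    exact fun j h1 h2 => H j j le_rfl h1 h2
  -- ### assembling the partition
  have hfin : B0.Finite := (Set.finite_Icc 1 (4 * d)).subset (hpart.1 B0 hB0).1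
  have hsub4 : ({a, 2 * d - a + 1, 2 * d + a, 4 * d - a + 1} : Set ℕ) ⊆ B0 := by
    intro u hu
    simp only [Set.mem_insert_iff, Set.mem_singleton_iff] at hu
    rcases hu with rfl | rfl | rfl | rfl
    · exact haB
    · exact hbval ▸ hbB
    · exact hcval ▸ hcB
    · exact heval ▸ heB
  have hB0eq : B0 = ({a, 2 * d - a + 1, 2 * d + a, 4 * d - a + 1} : Set ℕ) :=
    (Set.eq_of_subset_of_ncard_le hsub4
      (by rw [hB04, fourset_ncard hd ha1' ha2']) hfin).symm
  refine ⟨a, ha1', ha2', ?_⟩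
  ext B
  simp only [rho, Set.mem_setOf_eq]
  constructor
  · intro hB
    obtain ⟨x, hxB⟩ := (hpart.1 B hB).2
    obtain ⟨hx1, hx2⟩ := bnd hB x hxB
    rcases le_or_gt x d with hI | hI
    · rcases lt_trichotomy x a with hxa | rfl | hxa
      · have hK := key4 x (by omega) (by omega)
        rw [uniq_block hpart hB hK hxB (by left; rfl)]
        exact Or.inr (Or.inr ⟨x, by omega, by omega, Or.inl rfl⟩)
      · rw [uniq_block hpart hB hB0 hxB haB, hB0eq]
        exact Or.inl rfl
      · have hK := key1 x (by omega) (by omega)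
        rw [uniq_block hpart hB hK hxB (by left; rfl)]
        exact Or.inr (Or.inl ⟨x, by omega, by omega, Or.inl rfl⟩)
    · rcases le_or_gt x (2 * d) with hI2 | hI2
      · rcases lt_trichotomy x (2 * d - a + 1) with hxb | hxb | hxb
        · have hK := key1 (2 * d + 1 - x) (by omega) (by omega)
          have hxK : x ∈ ({2 * d + 1 - x, 2 * d - (2 * d + 1 - x) + 1} : Set ℕ) := by
            simp only [Set.mem_insert_iff, Set.mem_singleton_iff]; omega
          rw [uniq_block hpart hB hK hxB hxK]
          exact Or.inr (Or.inl ⟨2 * d + 1 - x, by omega, by omega, Or.inl rfl⟩)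
        · have hxb0 : x ∈ B0 := by rw [show x = b by omega]; exact hbB
          rw [uniq_block hpart hB hB0 hxB hxb0, hB0eq]
          exact Or.inl rfl
        · have hK := key2 (2 * d + 1 - x) (by omega) (by omega)
          have hxK : x ∈
              ({2 * d - (2 * d + 1 - x) + 1, 2 * d + (2 * d + 1 - x)} : Set ℕ) := by
            simp only [Set.mem_insert_iff, Set.mem_singleton_iff]; omega
          rw [uniq_block hpart hB hK hxB hxK]
          exact Or.inr (Or.inr ⟨2 * d + 1 - x, by omega, by omega, Or.inr rfl⟩)
      · rcases le_or_gt x (3 * d) with hI3 | hI3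
        · rcases lt_trichotomy x (2 * d + a) with hxc | hxc | hxc
          · have hK := key2 (x - 2 * d) (by omega) (by omega)
            have hxK : x ∈
                ({2 * d - (x - 2 * d) + 1, 2 * d + (x - 2 * d)} : Set ℕ) := by
              simp only [Set.mem_insert_iff, Set.mem_singleton_iff]; omega
            rw [uniq_block hpart hB hK hxB hxK]
            exact Or.inr (Or.inr ⟨x - 2 * d, by omega, by omega, Or.inr rfl⟩)
          · have hxc0 : x ∈ B0 := by rw [show x = c by omega]; exact hcB
            rw [uniq_block hpart hB hB0 hxB hxc0, hB0eq]
            exact Or.inl rfl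
          · have hK := key3 (x - 2 * d) (by omega) (by omega)
            have hxK : x ∈
                ({2 * d + (x - 2 * d), 4 * d - (x - 2 * d) + 1} : Set ℕ) := by
              simp only [Set.mem_insert_iff, Set.mem_singleton_iff]; omega
            rw [uniq_block hpart hB hK hxB hxK]
            exact Or.inr (Or.inl ⟨x - 2 * d, by omega, by omega, Or.inr rfl⟩)
        · rcases lt_trichotomy x (4 * d - a + 1) with hxe | hxe | hxe
          · have hK := key3 (4 * d + 1 - x) (by omega) (by omega)
            have hxK : x ∈
                ({2 * d + (4 * d + 1 - x), 4 * d - (4 * d + 1 - x) + 1} : Set ℕ) := by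
              simp only [Set.mem_insert_iff, Set.mem_singleton_iff]; omega
            rw [uniq_block hpart hB hK hxB hxK]
            exact Or.inr (Or.inl ⟨4 * d + 1 - x, by omega, by omega, Or.inr rfl⟩)
          · have hxe0 : x ∈ B0 := by rw [show x = e by omega]; exact heB
            rw [uniq_block hpart hB hB0 hxB hxe0, hB0eq]
            exact Or.inl rfl
          · have hK := key4 (4 * d + 1 - x) (by omega) (by omega)
            have hxK : x ∈
                ({4 * d + 1 - x, 4 * d - (4 * d + 1 - x) + 1} : Set ℕ) := by
              simp only [Set.mem_insert_iff, Set.mem_singleton_iff]; omega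
            rw [uniq_block hpart hB hK hxB hxK]
            exact Or.inr (Or.inr ⟨4 * d + 1 - x, by omega, by omega, Or.inl rfl⟩)
  · intro hB
    rcases hB with rfl | ⟨j, hj1, hj2, rfl | rfl⟩ | ⟨j, hj1, hj2, rfl | rfl⟩
    · rw [← hB0eq]; exact hB0
    · exact key1 j (by omega) hj2
    · exact key3 j (by omega) hj2
    · exact key4 j hj1 (by omega)
    · exact key2 j hj1 (by omega)

end Hard

/-- description of the class `𝒩𝒞⋆_{2,4}([4d])` as the disjoint union of
the non-crossing pairings respecting `π⋆` and the partitions `ρ₁,…,ρ_d`. -/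
theorem nc_two_four_partitions_classification (d : ℕ) (hd : 2 ≤ d) :
    ({C : Set (Set ℕ) | IsPartitionOn (Set.Icc 1 (4 * d)) C ∧ NonCrossingOn C ∧
        RespectsPiStar4 d C ∧ ∀ B ∈ C, B.ncard = 2 ∨ B.ncard = 4} =
      {C : Set (Set ℕ) | IsPartitionOn (Set.Icc 1 (4 * d)) C ∧ NonCrossingOn C ∧
        RespectsPiStar4 d C ∧ ∀ B ∈ C, B.ncard = 2} ∪
      {C : Set (Set ℕ) | ∃ h, 1 ≤ h ∧ h ≤ d ∧ C = rho d h}) ∧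
    Disjoint
      {C : Set (Set ℕ) | IsPartitionOn (Set.Icc 1 (4 * d)) C ∧ NonCrossingOn C ∧
        RespectsPiStar4 d C ∧ ∀ B ∈ C, B.ncard = 2}
      {C : Set (Set ℕ) | ∃ h, 1 ≤ h ∧ h ≤ d ∧ C = rho d h} := by
  constructor
  · ext C
    simp only [Set.mem_setOf_eq, Set.mem_union]
    constructor
    · rintro ⟨hp, hnc, hr, hc⟩
      by_cases hall : ∀ B ∈ C, B.ncard = 2
      · exact Or.inl ⟨hp, hnc, hr, hall⟩
      · push_neg at hall
        obtain ⟨B, hB, hB2⟩ := hall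
        have hB4 : B.ncard = 4 := by
          rcases hc B hB with h | h
          · exact (hB2 h).elim
          · exact h
        exact Or.inr (hard hd hp hnc hr hc hB hB4)
    · rintro (⟨hp, hnc, hr, hc⟩ | ⟨h, h1, h2, rfl⟩)
      · exact ⟨hp, hnc, hr, fun B hB => Or.inl (hc B hB)⟩
      · exact ⟨rho_partition hd h1 h2, rho_nc hd h1 h2, rho_resp hd h1 h2,
          rho_sizes hd h1 h2⟩
  · rw [Set.disjoint_left]
    rintro C ⟨hp, hnc, hr, hc⟩ ⟨h, h1, h2, rfl⟩
    have hfs : ({h, 2 * d - h + 1, 2 * d + h, 4 * d - h + 1} : Set ℕ) ∈ rho d h :=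
      Or.inl rfl
    have h2card := hc _ hfs
    rw [fourset_ncard hd h1 h2] at h2card
    omega
end
end

section
/- Let d ≥ 2 be an even integer and let π* be the partition of {1,…,3d} into the three consecutive intervals {1,…,d}, {d+1,…,2d}, {2d+1,…,3d}. Then the number of non-crossing partitions of {1,…,3d} that respect π* and have no singleton blocks equals the number of non-crossing pairings of {1,…,3d} that respect π*. -/
noncomputable section

/-- The blocks of the interval partition `π⋆` of `{1,…,3d}` into three consecutive
intervals of length `d`. -/
def piStar3 (d : ℕ) : Set (Set ℕ) :=
  {B | ∃ k : ℕ, k < 3 ∧ B = Set.Icc (k * d + 1) ((k + 1) * d)}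

/-- `C` respects `π⋆`: every block of `C` contains at most one element from each block of
`π⋆`. -/
def RespectsPiStar3 (d : ℕ) (C : Set (Set ℕ)) : Prop :=
  ∀ B ∈ C, ∀ c ∈ piStar3 d, (B ∩ c).Subsingleton

/-!
Since a respecting block meets each of the three intervals at most once, every block of a
singleton-free such partition has two or three elements, and a three-element block has one
element in each interval. Two such triples always cross, as their middle elements already
interleave with the outer ones. So at most one block is a triple, and the remaining blocks
pair up the other `3d - 3` points, which is impossible when `d` is even.
-/

namespace IsPartitionOn

variable {S : Set ℕ} {C : Set (Set ℕ)}

lemma eq_of_mem (hC : IsPartitionOn S C) {B B' : Set ℕ} (hB : B ∈ C) (hB' : B' ∈ C)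
    {x : ℕ} (hx : x ∈ B) (hx' : x ∈ B') : B = B' :=
  (hC.2 x ((hC.1 B hB).1 hx)).unique ⟨hB, hx⟩ ⟨hB', hx'⟩

lemma sdiff_block (hC : IsPartitionOn S C) {B : Set ℕ} (hB : B ∈ C) :
    IsPartitionOn (S \ B) (C \ {B}) := by
  refine ⟨fun B' ⟨hB'C, hB'B⟩ => ⟨fun x hx => ⟨(hC.1 B' hB'C).1 hx, fun hxB => ?_⟩,
    (hC.1 B' hB'C).2⟩, fun x ⟨hxS, hxB⟩ => ?_⟩
  · exact hB'B (hC.eq_of_mem hB'C hB hx hxB)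
  · obtain ⟨B', ⟨hB'C, hxB'⟩, huniq⟩ := hC.2 x hxS
    exact ⟨B', ⟨⟨hB'C, fun h => hxB ((Set.mem_singleton_iff.mp h) ▸ hxB')⟩, hxB'⟩,
      fun B'' ⟨⟨hB''C, _⟩, hxB''⟩ => huniq B'' ⟨hB''C, hxB''⟩⟩

lemma even_ncard_of_forall_ncard_eq_two (hC : IsPartitionOn S C) (hS : S.Finite)
    (hpairs : ∀ B ∈ C, B.ncard = 2) : Even S.ncard := by
  induction hn : S.ncard using Nat.strong_induction_on generalizing S C with
  | _ n ih =>
    obtain rfl | ⟨x, hx⟩ := S.eq_empty_or_nonempty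
    · simp [← hn]
    obtain ⟨B, ⟨hBC, -⟩, -⟩ := hC.2 x hx
    have hBS : B ⊆ S := (hC.1 B hBC).1
    have hB : B.ncard = 2 := hpairs B hBC
    have h2n : 2 ≤ n := hn ▸ hB ▸ Set.ncard_le_ncard hBS hS
    have hrest : Even (n - 2) :=
      ih (n - 2) (by omega) (hC.sdiff_block hBC) hS.sdiff
        (fun B' hB' => hpairs B' hB'.1) (by rw [Set.ncard_sdiff hBS (hS.subset hBS), hn, hB])
    simpa [Nat.even_sub h2n] using hrest

end IsPartitionOn

lemma NonCrossingOn.eq_of_interleaved {S : Set ℕ} {C : Set (Set ℕ)} (hnc : NonCrossingOn C)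
    (hC : IsPartitionOn S C) {B B' : Set ℕ} (hB : B ∈ C) (hB' : B' ∈ C)
    {a₀ a₁ a₂ b₀ b₁ b₂ : ℕ} (ha₀ : a₀ ∈ B) (ha₁ : a₁ ∈ B) (ha₂ : a₂ ∈ B)
    (hb₀ : b₀ ∈ B') (hb₁ : b₁ ∈ B') (hb₂ : b₂ ∈ B')
    (h₀ : a₀ < b₁) (h₁ : b₀ < a₁) (h₂ : a₁ < b₂) (h₃ : b₁ < a₂) : B = B' := by
  by_contra hne
  have ha₁b₁ : a₁ ≠ b₁ := fun h => hne (hC.eq_of_mem hB hB' ha₁ (h ▸ hb₁))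
  rcases ha₁b₁.lt_or_gt with hlt | hgt
  · exact hnc ⟨b₀, a₁, b₁, a₂, h₁, hlt, h₃, B', hB', B, hB, Ne.symm hne, hb₀, hb₁, ha₁, ha₂⟩
  · exact hnc ⟨a₀, b₁, a₁, b₂, h₀, hgt, h₂, B, hB, B', hB', hne, ha₀, ha₁, hb₁, hb₂⟩

section PiStar3

variable {d : ℕ} {C : Set (Set ℕ)} {B : Set ℕ}

lemma ncard_le_ncard_inter_thirds (hBS : B ⊆ Set.Icc 1 (3 * d)) :
    B.ncard ≤ (B ∩ Set.Icc 1 d).ncard + (B ∩ Set.Icc (d + 1) (2 * d)).ncard +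
      (B ∩ Set.Icc (2 * d + 1) (3 * d)).ncard := by
  have hcover : B ⊆ B ∩ Set.Icc 1 d ∪ B ∩ Set.Icc (d + 1) (2 * d) ∪
      B ∩ Set.Icc (2 * d + 1) (3 * d) := fun x hx => by
    have := hBS hx
    simp only [Set.mem_union, Set.mem_inter_iff, Set.mem_Icc, hx, true_and] at this ⊢
    omega
  calc B.ncard ≤ _ := Set.ncard_le_ncard hcover
    _ ≤ _ := (Set.ncard_union_le _ _).trans (by gcongr; exact Set.ncard_union_le _ _)

lemma RespectsPiStar3.ncard_inter_thirds_le_one (hresp : RespectsPiStar3 d C) (hB : B ∈ C) :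
    (B ∩ Set.Icc 1 d).ncard ≤ 1 ∧ (B ∩ Set.Icc (d + 1) (2 * d)).ncard ≤ 1 ∧
      (B ∩ Set.Icc (2 * d + 1) (3 * d)).ncard ≤ 1 := by
  have key (k : ℕ) (hk : k < 3) : (B ∩ Set.Icc (k * d + 1) ((k + 1) * d)).ncard ≤ 1 :=
    have h := hresp B hB _ ⟨k, hk, rfl⟩
    (Set.ncard_le_one h.finite).2 fun _ ha _ hb => h ha hb
  have h₀ := key 0 (by norm_num)
  have h₁ := key 1 (by norm_num)
  have h₂ := key 2 (by norm_num)
  simp only [zero_mul, zero_add, one_mul, Nat.reduceAdd] at h₀ h₁ h₂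
  exact ⟨h₀, h₁, h₂⟩

lemma RespectsPiStar3.ncard_le_three (hresp : RespectsPiStar3 d C) (hB : B ∈ C)
    (hBS : B ⊆ Set.Icc 1 (3 * d)) : B.ncard ≤ 3 := by
  have := hresp.ncard_inter_thirds_le_one hB
  have := ncard_le_ncard_inter_thirds hBS
  omega

lemma RespectsPiStar3.exists_mem_thirds (hresp : RespectsPiStar3 d C) (hB : B ∈ C)
    (hBS : B ⊆ Set.Icc 1 (3 * d)) (h3 : B.ncard = 3) :
    ∃ a₀ ∈ B, ∃ a₁ ∈ B, ∃ a₂ ∈ B, a₀ ∈ Set.Icc 1 d ∧ a₁ ∈ Set.Icc (d + 1) (2 * d) ∧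
      a₂ ∈ Set.Icc (2 * d + 1) (3 * d) := by
  have := hresp.ncard_inter_thirds_le_one hB
  have := ncard_le_ncard_inter_thirds hBS
  obtain ⟨a₀, ha₀B, ha₀⟩ := Set.nonempty_of_ncard_ne_zero (s := B ∩ Set.Icc 1 d) (by omega)
  obtain ⟨a₁, ha₁B, ha₁⟩ :=
    Set.nonempty_of_ncard_ne_zero (s := B ∩ Set.Icc (d + 1) (2 * d)) (by omega)
  obtain ⟨a₂, ha₂B, ha₂⟩ :=
    Set.nonempty_of_ncard_ne_zero (s := B ∩ Set.Icc (2 * d + 1) (3 * d)) (by omega)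
  exact ⟨a₀, ha₀B, a₁, ha₁B, a₂, ha₂B, ha₀, ha₁, ha₂⟩

lemma RespectsPiStar3.ncard_eq_two_or_three (hresp : RespectsPiStar3 d C)
    (hC : IsPartitionOn (Set.Icc 1 (3 * d)) C) (hns : ∀ B ∈ C, B.ncard ≠ 1) (hB : B ∈ C) :
    B.ncard = 2 ∨ B.ncard = 3 := by
  have hBS := (hC.1 B hB).1
  have hpos := (Set.ncard_pos ((Set.finite_Icc _ _).subset hBS)).2 (hC.1 B hB).2
  have := hresp.ncard_le_three hB hBS
  have := hns B hB
  omega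

lemma NonCrossingOn.eq_of_ncard_eq_three (hnc : NonCrossingOn C)
    (hC : IsPartitionOn (Set.Icc 1 (3 * d)) C) (hresp : RespectsPiStar3 d C) {B' : Set ℕ}
    (hB : B ∈ C) (hB' : B' ∈ C) (h3 : B.ncard = 3) (h3' : B'.ncard = 3) : B = B' := by
  obtain ⟨a₀, ha₀, a₁, ha₁, a₂, ha₂, ⟨-, ha₀d⟩, ⟨ha₁d, ha₁d'⟩, ⟨ha₂d, -⟩⟩ :=
    hresp.exists_mem_thirds hB (hC.1 B hB).1 h3
  obtain ⟨b₀, hb₀, b₁, hb₁, b₂, hb₂, ⟨-, hb₀d⟩, ⟨hb₁d, hb₁d'⟩, ⟨hb₂d, -⟩⟩ :=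
    hresp.exists_mem_thirds hB' (hC.1 B' hB').1 h3'
  exact hnc.eq_of_interleaved hC hB hB' ha₀ ha₁ ha₂ hb₀ hb₁ hb₂
    (by omega) (by omega) (by omega) (by omega)

lemma NonCrossingOn.ncard_eq_two_of_even (hnc : NonCrossingOn C)
    (hC : IsPartitionOn (Set.Icc 1 (3 * d)) C) (hresp : RespectsPiStar3 d C) (heven : Even d)
    (hns : ∀ B ∈ C, B.ncard ≠ 1) (hB : B ∈ C) : B.ncard = 2 := by
  refine (hresp.ncard_eq_two_or_three hC hns hB).resolve_right fun h3 => ?_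
  have hBS := (hC.1 B hB).1
  have hrest : Even (Set.Icc 1 (3 * d) \ B).ncard :=
    (hC.sdiff_block hB).even_ncard_of_forall_ncard_eq_two (Set.finite_Icc _ _).sdiff
      fun B' ⟨hB'C, hB'B⟩ => (hresp.ncard_eq_two_or_three hC hns hB'C).resolve_right
        fun h3' => hB'B (hnc.eq_of_ncard_eq_three hC hresp hB'C hB h3' h3)
  have hle : 3 ≤ 3 * d := by simpa [h3] using Set.ncard_le_ncard hBS
  rw [Set.ncard_sdiff' hBS, Set.ncard_Icc_nat, h3, Nat.add_sub_cancel, Nat.even_sub hle] at hrest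
  exact absurd (hrest.1 (heven.mul_left 3)) (by decide)

end PiStar3

theorem card_nc_no_singleton_eq_card_nc_pairings_general (d : ℕ) (heven : Even d) :
    {C : Set (Set ℕ) | IsPartitionOn (Set.Icc 1 (3 * d)) C ∧ NonCrossingOn C ∧
        RespectsPiStar3 d C ∧ ∀ B ∈ C, B.ncard ≠ 1}.ncard =
    {C : Set (Set ℕ) | IsPartitionOn (Set.Icc 1 (3 * d)) C ∧ NonCrossingOn C ∧
        RespectsPiStar3 d C ∧ ∀ B ∈ C, B.ncard = 2}.ncard := by
  congr 1
  ext C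
  refine and_congr_right fun hC => and_congr_right fun hnc => and_congr_right fun hresp => ?_
  exact ⟨fun hns B hB => hnc.ncard_eq_two_of_even hC hresp heven hns hB,
    fun hpairs B hB => by simp [hpairs B hB]⟩

/-- for even `d`, the number of non-crossing partitions of `{1,…,3d}`
respecting `π⋆` with no singleton blocks equals the number of non-crossing pairings of
`{1,…,3d}` respecting `π⋆`. -/
theorem card_nc_no_singleton_eq_card_nc_pairings (d : ℕ) (hd : 2 ≤ d) (heven : Even d) :
    {C : Set (Set ℕ) | IsPartitionOn (Set.Icc 1 (3 * d)) C ∧ NonCrossingOn C ∧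
        RespectsPiStar3 d C ∧ ∀ B ∈ C, B.ncard ≠ 1}.ncard =
    {C : Set (Set ℕ) | IsPartitionOn (Set.Icc 1 (3 * d)) C ∧ NonCrossingOn C ∧
        RespectsPiStar3 d C ∧ ∀ B ∈ C, B.ncard = 2}.ncard :=
  card_nc_no_singleton_eq_card_nc_pairings_general d heven
end
end

section
/- Let t > 1 be a real number. Then the set of triplets (a,b,c) ∈ ℝ³ such that the 4×4 Hankel matrix M_t = (m_{i+j})_{0 ≤ i,j ≤ 3} built from the sequence (m_0,…,m_6) = (1, 0, 1, a, t, b, c), i.e. the matrix with rows (1,0,1,a), (0,1,a,t), (1,a,t,b), (a,t,b,c), is positive definite, is a non-empty open subset of ℝ³; in particular it has positive Lebesgue measure. -/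
/-!
Positive definiteness of a real symmetric matrix is an open condition: the quadratic form is
positive on the compact unit sphere, hence stays positive there under small perturbations of the
matrix, and homogeneity extends this to all nonzero vectors. The Hankel matrix depends continuously
on `(a, b, c)`, so the set in question is open. It is nonempty because for `a = b = 0` and
`c = t ^ 2 + 1` the quadratic form is `(x₀ + x₂)² + (t - 1) x₂² + (x₁ + t x₃)² + x₃²`. A nonempty
open set has positive Lebesgue measure.
-/

noncomputable section

/-- The 4×4 Hankel matrix associated with the moment sequence `(1, 0, 1, a, t, b, c)`. -/
def hankelMatrix (t a b c : ℝ) : Matrix (Fin 4) (Fin 4) ℝ :=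
  !![1, 0, 1, a; 0, 1, a, t; 1, a, t, b; a, t, b, c]

/-- The set of triplets `(a, b, c)` for which the Hankel matrix is positive definite. -/
def hankelPosDefSet (t : ℝ) : Set (ℝ × ℝ × ℝ) :=
  {p | (hankelMatrix t p.1 p.2.1 p.2.2).PosDef}

open Filter Topology Matrix

theorem Matrix.isOpen_setOf_posDef {X n : Type*} [TopologicalSpace X] [Fintype n]
    {f : X → Matrix n n ℝ} (hf : Continuous f) (hherm : ∀ p, (f p).IsHermitian) :
    IsOpen {p | (f p).PosDef} := by
  refine isOpen_iff_eventually.2 fun p₀ hp₀ => ?_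
  have hq : Continuous fun z : X × (n → ℝ) => z.2 ⬝ᵥ f z.1 *ᵥ z.2 :=
    continuous_snd.dotProduct ((hf.comp continuous_fst).matrix_mulVec continuous_snd)
  have hsphere : ∀ᶠ p in 𝓝 p₀, ∀ y ∈ Metric.sphere (0 : n → ℝ) 1, 0 < y ⬝ᵥ f p *ᵥ y := by
    refine (isCompact_sphere 0 1).eventually_forall_of_forall_eventually fun y hy => ?_
    have hy0 : y ≠ 0 := ne_zero_of_mem_sphere one_ne_zero ⟨y, hy⟩
    have hpos := (posDef_iff_dotProduct_mulVec.1 hp₀).2 hy0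
    rw [star_trivial] at hpos
    exact continuousAt_const.eventually_lt (hq.continuousAt (x := (p₀, y))) hpos
  filter_upwards [hsphere] with p hp
  refine posDef_iff_dotProduct_mulVec.2 ⟨hherm p, fun x hx => ?_⟩
  have hnorm : 0 < ‖x‖ := norm_pos_iff.2 hx
  have hx' : x = ‖x‖ • (‖x‖⁻¹ • x) := by rw [smul_smul, mul_inv_cancel₀ hnorm.ne', one_smul]
  have hunit := hp (‖x‖⁻¹ • x) (by simpa using norm_smul_inv_norm (𝕜 := ℝ) hx)
  rw [star_trivial, hx', mulVec_smul, dotProduct_smul, smul_dotProduct, smul_eq_mul, smul_eq_mul]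
  exact mul_pos hnorm (mul_pos hnorm hunit)

theorem continuous_hankelMatrix (t : ℝ) :
    Continuous fun p : ℝ × ℝ × ℝ => hankelMatrix t p.1 p.2.1 p.2.2 := by
  unfold hankelMatrix
  fun_prop

theorem isHermitian_hankelMatrix (t a b c : ℝ) : (hankelMatrix t a b c).IsHermitian := by
  ext i j
  fin_cases i <;> fin_cases j <;> rfl

theorem posDef_hankelMatrix_zero_zero_sq_add_one {t : ℝ} (ht : 1 < t) :
    (hankelMatrix t 0 0 (t ^ 2 + 1)).PosDef := by
  refine posDef_iff_dotProduct_mulVec.2 ⟨isHermitian_hankelMatrix .., fun x hx => ?_⟩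
  have hquad : star x ⬝ᵥ hankelMatrix t 0 0 (t ^ 2 + 1) *ᵥ x =
      (x 0 + x 2) ^ 2 + (t - 1) * x 2 ^ 2 + (x 1 + t * x 3) ^ 2 + x 3 ^ 2 := by
    simp only [dotProduct, Pi.star_apply, star_trivial, mulVec, hankelMatrix, of_apply, cons_val',
      cons_val_fin_one, Fin.sum_univ_four, Fin.isValue, cons_val_zero, cons_val_one, cons_val,
      one_mul, zero_mul, add_zero, zero_add]
    ring
  rw [hquad]
  have ht' : 0 < t - 1 := sub_pos.2 ht
  by_contra! hle
  apply hx
  have h3 : x 3 = 0 := by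
    nlinarith [sq_nonneg (x 0 + x 2), sq_nonneg (x 1 + t * x 3), mul_nonneg ht'.le (sq_nonneg (x 2))]
  have h2 : x 2 = 0 := by
    by_contra h2
    nlinarith [sq_nonneg (x 0 + x 2), sq_nonneg (x 1 + t * x 3), mul_pos ht' (sq_pos_of_ne_zero h2)]
  simp only [h2, h3] at hle
  have h1 : x 1 = 0 := by nlinarith [sq_nonneg (x 0)]
  have h0 : x 0 = 0 := by nlinarith [sq_nonneg (x 1)]
  ext i
  fin_cases i <;> assumption

/-- the set of triplets `(a,b,c)` making the Hankel matrix built from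
`(1, 0, 1, a, t, b, c)` positive definite is a non-empty open subset of `ℝ³`, hence of
positive Lebesgue measure. -/
theorem hankel_posDef_set_nonempty_open (t : ℝ) (ht : 1 < t) :
    (hankelPosDefSet t).Nonempty ∧ IsOpen (hankelPosDefSet t) ∧
      0 < MeasureTheory.volume (hankelPosDefSet t) := by
  have hne : (hankelPosDefSet t).Nonempty :=
    ⟨(0, 0, t ^ 2 + 1), posDef_hankelMatrix_zero_zero_sq_add_one ht⟩
  have hopen : IsOpen (hankelPosDefSet t) :=
    isOpen_setOf_posDef (continuous_hankelMatrix t) fun _ => isHermitian_hankelMatrix ..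
  exact ⟨hne, hopen, hopen.measure_pos _ hne⟩
end
end
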